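/- arXiv:0810.0477 — 14 statements merged into one kernel-verified Lean document; each statement's English description precedes it below -/
import Mathlib

section
/- Let (X⁰, Y⁰) ∈ ℂⁿ × ℂᵐ be a local minimum of the scalar potential V. Then Σᵢ₌₁ⁿ Xᵢ⁰ ∂fᵢ/∂Y_J(Y⁰) = 0 for every J = 1,…,m; that is, the second term of V vanishes identically at any local minimum. -/
open Complex Filter Topology

/-- In a Wess–Zumino model with `n` fields `X` of R-charge 2 and `m` fields
`Y` of R-charge 0, superpotential `W = Σᵢ Xᵢ fᵢ(Y)` with each `fᵢ` holomorphic, and scalar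
potential `V(X,Y) = Σᵢ |fᵢ(Y)|² + Σ_J |Σᵢ Xᵢ ∂fᵢ/∂Y_J(Y)|²`, at any local minimum
`(X⁰, Y⁰)` of `V` the second term vanishes identically:
`Σᵢ Xᵢ⁰ ∂fᵢ/∂Y_J(Y⁰) = 0` for every `J`. -/
theorem tree_level_second_term_vanishes
    (n m : ℕ) (f : Fin n → (Fin m → ℂ) → ℂ)
    (hf : ∀ i, Differentiable ℂ (f i))
    (V : (Fin n → ℂ) × (Fin m → ℂ) → ℝ)
    (hV : ∀ X Y, V (X, Y) =
      (∑ i, ‖f i Y‖ ^ 2) +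
      ∑ J, ‖∑ i, X i * fderiv ℂ (f i) Y (Pi.single J 1)‖ ^ 2)
    (X0 : Fin n → ℂ) (Y0 : Fin m → ℂ)
    (hmin : IsLocalMin V (X0, Y0)) :
    ∀ J : Fin m, ∑ i, X0 i * fderiv ℂ (f i) Y0 (Pi.single J 1) = 0 := by
  set c : Fin m → ℂ := fun J => ∑ i, X0 i * fderiv ℂ (f i) Y0 (Pi.single J 1) with hc
  set A : ℝ := ∑ i, ‖f i Y0‖ ^ 2 with hA
  set B : ℝ := ∑ J, ‖c J‖ ^ 2 with hB
  have hBnn : 0 ≤ B := Finset.sum_nonneg fun J _ => by positivity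
  -- the path t ↦ ((t:ℂ) • X0, Y0)
  set g : ℝ → (Fin n → ℂ) × (Fin m → ℂ) := fun t => ((t : ℂ) • X0, Y0) with hg
  have hg1 : g 1 = (X0, Y0) := by simp [hg]
  have hgc : ContinuousAt g 1 := by
    apply ContinuousAt.prodMk
    · exact (continuous_ofReal.smul continuous_const).continuousAt
    · exact continuousAt_const
  have hmin' : IsLocalMin (V ∘ g) 1 := by
    rw [← hg1] at hmin
    exact hmin.comp_continuous hgc
  have hVg : ∀ t : ℝ, (V ∘ g) t = A + t ^ 2 * B := by
    intro t
    have : (V ∘ g) t = A + ∑ J, ‖∑ i, ((t : ℂ) * X0 i) * fderiv ℂ (f i) Y0 (Pi.single J 1)‖ ^ 2 := by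
      simp [hg, hV, Pi.smul_apply, smul_eq_mul, hA]
    rw [this]
    congr 1
    rw [Finset.mul_sum]
    refine Finset.sum_congr rfl fun J _ => ?_
    have h1 : ∑ i, ((t : ℂ) * X0 i) * fderiv ℂ (f i) Y0 (Pi.single J 1) = (t : ℂ) * c J := by
      rw [hc, Finset.mul_sum]
      exact Finset.sum_congr rfl fun i _ => by ring
    rw [h1, norm_mul, mul_pow, Complex.norm_real, Real.norm_eq_abs, _root_.sq_abs]
  have hB0 : B = 0 := by
    by_contra hBne
    have hBpos : 0 < B := lt_of_le_of_ne hBnn (Ne.symm hBne)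
    have hev : ∀ᶠ t in 𝓝 (1 : ℝ), A + 1 ^ 2 * B ≤ A + t ^ 2 * B := by
      filter_upwards [hmin'] with t ht
      rwa [hVg t, hVg 1] at ht
    rw [Metric.eventually_nhds_iff] at hev
    obtain ⟨ε, hε, hball⟩ := hev
    set t : ℝ := 1 - min ε 1 / 2 with ht
    have hεm : 0 < min ε 1 := lt_min hε one_pos
    have hlt : t < 1 := by simp [ht]; linarith
    have hpos : 0 < t := by
      have : min ε 1 ≤ 1 := min_le_right _ _
      simp [ht]; linarith
    have hdist : dist t 1 < ε := by
      have : min ε 1 ≤ ε := min_le_left _ _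
      rw [Real.dist_eq, ht]
      rw [abs_of_nonpos (by linarith)]
      linarith
    have := hball hdist
    have ht2 : t ^ 2 < 1 := by nlinarith
    nlinarith
  intro J
  have hsum : ∑ J, ‖c J‖ ^ 2 = 0 := hB0
  have := (Finset.sum_eq_zero_iff_of_nonneg (fun J _ => by positivity)).mp hsum J (Finset.mem_univ J)
  have : ‖c J‖ = 0 := by nlinarith [norm_nonneg (c J)]
  exact norm_eq_zero.mp this
end

section
/- If (X⁰, Y⁰) ∈ ℂⁿ × ℂᵐ is a local minimum of the scalar potential V, then V(cX⁰, Y⁰) = V(X⁰, Y⁰) for all c ∈ ℂ; the complex line {(cX⁰, Y⁰) : c ∈ ℂ} through the minimum is a flat direction of V. -/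
open Complex Filter Topology

/-- In a Wess–Zumino model with `n` fields `X` of R-charge 2 and `m` fields
`Y` of R-charge 0, superpotential `W = Σᵢ Xᵢ fᵢ(Y)` with each `fᵢ` holomorphic, and scalar
potential `V(X,Y) = Σᵢ |fᵢ(Y)|² + Σ_J |Σᵢ Xᵢ ∂fᵢ/∂Y_J(Y)|²`, if `(X⁰, Y⁰)` is a local
minimum of `V` then `V(cX⁰, Y⁰) = V(X⁰, Y⁰)` for every `c ∈ ℂ`: the complex line through
the minimum is a flat direction of `V`. -/
theorem flat_direction_through_local_min
    (n m : ℕ) (f : Fin n → (Fin m → ℂ) → ℂ)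
    (hf : ∀ i, Differentiable ℂ (f i))
    (V : (Fin n → ℂ) × (Fin m → ℂ) → ℝ)
    (hV : ∀ X Y, V (X, Y) =
      (∑ i, ‖f i Y‖ ^ 2) +
      ∑ J, ‖∑ i, X i * fderiv ℂ (f i) Y (Pi.single J 1)‖ ^ 2)
    (X0 : Fin n → ℂ) (Y0 : Fin m → ℂ)
    (hmin : IsLocalMin V (X0, Y0)) :
    ∀ c : ℂ, V (c • X0, Y0) = V (X0, Y0) := by
  set A : ℝ := ∑ i, ‖f i Y0‖ ^ 2 with hA
  set D : Fin m → ℂ := fun J => ∑ i, X0 i * fderiv ℂ (f i) Y0 (Pi.single J 1) with hD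
  set B : ℝ := ∑ J, ‖D J‖ ^ 2 with hB
  have key : ∀ a : ℂ, V (a • X0, Y0) = A + ‖a‖ ^ 2 * B := by
    intro a
    rw [hV]
    congr 1
    rw [hB, Finset.mul_sum]
    refine Finset.sum_congr rfl fun J _ => ?_
    have h1 : ∑ i, (a • X0) i * fderiv ℂ (f i) Y0 (Pi.single J 1) = a * D J := by
      rw [hD, Finset.mul_sum]
      refine Finset.sum_congr rfl fun i _ => ?_
      simp [mul_assoc]
    rw [h1, norm_mul, mul_pow]
  have hBnn : 0 ≤ B := Finset.sum_nonneg fun J _ => sq_nonneg _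
  have hB0 : B = 0 := by
    by_contra h
    have hBpos : 0 < B := lt_of_le_of_ne hBnn (Ne.symm h)
    have hφ : ContinuousAt (fun t : ℝ => (((t : ℂ)) • X0, Y0)) 1 := by fun_prop
    have hmin' : IsLocalMin V ((fun t : ℝ => (((t : ℂ)) • X0, Y0)) 1) := by
      simpa using hmin
    have h2 : IsLocalMin (V ∘ fun t : ℝ => (((t : ℂ)) • X0, Y0)) 1 :=
      IsLocalMin.comp_continuous (g := fun t : ℝ => (((t : ℂ)) • X0, Y0)) (b := 1) hmin' hφ
    have h3 : ∀ᶠ t : ℝ in 𝓝 1,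
        V (((1 : ℝ) : ℂ) • X0, Y0) ≤ V (((t : ℂ)) • X0, Y0) := h2
    have h4 : ∀ᶠ t : ℝ in 𝓝 (1 : ℝ), t ∈ Set.Ioo (0 : ℝ) 1 → False := by
      filter_upwards [h3] with t ht hmem
      rw [key, key] at ht
      have ht2 : ‖((t : ℂ))‖ ^ 2 < ‖((1 : ℝ) : ℂ)‖ ^ 2 := by
        simp only [Complex.norm_real, Real.norm_eq_abs]
        rw [abs_of_pos hmem.1, abs_one, one_pow]
        nlinarith [hmem.2, hmem.1]
      nlinarith
    -- get a point of Ioo 0 1 in any neighborhood of 1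
    have h5 : ∀ᶠ t : ℝ in 𝓝[<] (1 : ℝ), False := by
      have h6 : ∀ᶠ t : ℝ in 𝓝[<] (1 : ℝ), t ∈ Set.Ioo (0 : ℝ) 1 → False :=
        nhdsWithin_le_nhds h4
      have h7 : ∀ᶠ t : ℝ in 𝓝[<] (1 : ℝ), t ∈ Set.Ioo (0 : ℝ) 1 := by
        have : Set.Ioo (0 : ℝ) 1 ∈ 𝓝[<] (1 : ℝ) := Ioo_mem_nhdsLT one_pos
        exact this
      filter_upwards [h6, h7] with t ht hmem using ht hmem
    exact h5.exists.choose_spec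
  intro c
  have e1 : V (X0, Y0) = A + 1 * B := by
    have := key 1
    simpa using this
  rw [key c, e1, hB0]
  ring
end

section
/- Let (X⁰, Y⁰) ∈ ℂⁿ × ℂᵐ be a local minimum of the scalar potential V. Then either X⁰ = 0, so that (X⁰, Y⁰) is a fixed point of the R-symmetry action (X,Y) ↦ (e^{2iα}X, Y) for all α ∈ ℝ and the R-symmetry is unbroken, or X⁰ ≠ 0 and V is constant on the complex line {(cX⁰, Y⁰) : c ∈ ℂ}, which contains the R-invariant point (0, Y⁰). In particular, when every field has R-charge 0 or 2, the R-symmetry cannot be spontaneously broken at an isolated tree-level minimum of V. -/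
open Complex Filter Topology

/-- In a Wess–Zumino model with fields of R-charge 2 (`X`) and 0 (`Y`) only,
superpotential `W = Σᵢ Xᵢ fᵢ(Y)` and scalar potential
`V(X,Y) = Σᵢ |fᵢ(Y)|² + Σ_J |Σᵢ Xᵢ ∂fᵢ/∂Y_J(Y)|²`, at any local minimum `(X⁰, Y⁰)` of `V`
either `X⁰ = 0`, so `(X⁰, Y⁰)` is a fixed point of the R-symmetry `(X,Y) ↦ (e^{2iα}X, Y)`
for all `α ∈ ℝ` and the R-symmetry is unbroken, or `X⁰ ≠ 0` and `V` is constant on the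
complex line `{(cX⁰, Y⁰) : c ∈ ℂ}`, which contains the R-invariant point `(0, Y⁰)`.
In particular, when every field has R-charge 0 or 2, the R-symmetry cannot be spontaneously
broken at an isolated tree-level minimum of `V`. -/
theorem no_tree_level_R_breaking_with_charges_zero_two
    (n m : ℕ) (f : Fin n → (Fin m → ℂ) → ℂ)
    (hf : ∀ i, Differentiable ℂ (f i))
    (V : (Fin n → ℂ) × (Fin m → ℂ) → ℝ)
    (hV : ∀ X Y, V (X, Y) =
      (∑ i, ‖f i Y‖ ^ 2) +
      ∑ J, ‖∑ i, X i * fderiv ℂ (f i) Y (Pi.single J 1)‖ ^ 2)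
    (X0 : Fin n → ℂ) (Y0 : Fin m → ℂ)
    (hmin : IsLocalMin V (X0, Y0)) :
    (X0 = 0 ∧ ∀ α : ℝ, (Complex.exp (2 * α * Complex.I) • X0, Y0) = (X0, Y0)) ∨
    (X0 ≠ 0 ∧ (∀ c : ℂ, V (c • X0, Y0) = V (X0, Y0)) ∧
      (0 : Fin n → ℂ) = (0 : ℂ) • X0) := by
  by_cases hX : X0 = 0
  · exact Or.inl ⟨hX, fun α => by simp [hX]⟩
  · right
    set A : ℝ := ∑ i, ‖f i Y0‖ ^ 2 with hA
    set B : ℝ := ∑ J, ‖∑ i, X0 i * fderiv ℂ (f i) Y0 (Pi.single J 1)‖ ^ 2 with hB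
    have hkey : ∀ c : ℂ, V (c • X0, Y0) = A + ‖c‖ ^ 2 * B := by
      intro c
      rw [hV, hB, Finset.mul_sum]
      congr 1
      refine Finset.sum_congr rfl fun J _ => ?_
      have h1 : ∑ i, (c • X0) i * fderiv ℂ (f i) Y0 (Pi.single J 1)
           = c * ∑ i, X0 i * fderiv ℂ (f i) Y0 (Pi.single J 1) := by
        rw [Finset.mul_sum]
        exact Finset.sum_congr rfl fun i _ => by simp [mul_assoc]
      rw [h1, norm_mul, mul_pow]
    have hBnn : 0 ≤ B := Finset.sum_nonneg fun J _ => by positivity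
    have hφ : ContinuousAt (fun t : ℝ => (((t : ℂ) • X0, Y0) : (Fin n → ℂ) × (Fin m → ℂ))) 1 := by
      fun_prop
    have h10 : (((1 : ℝ) : ℂ) • X0, Y0) = (X0, Y0) := by simp
    have htend : Tendsto (fun t : ℝ => (((t : ℂ) • X0, Y0) : (Fin n → ℂ) × (Fin m → ℂ)))
        (𝓝 1) (𝓝 (X0, Y0)) := h10 ▸ hφ
    have hloc : ∀ᶠ t : ℝ in 𝓝 1, V (X0, Y0) ≤ V (((t : ℂ)) • X0, Y0) :=
      htend.eventually hmin
    have h3 : ∀ᶠ t : ℝ in 𝓝[<] 1, V (X0, Y0) ≤ V (((t : ℂ)) • X0, Y0) :=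
      nhdsWithin_le_nhds hloc
    have hIoo : Set.Ioo (0 : ℝ) 1 ∈ 𝓝[<] (1 : ℝ) :=
      Ioo_mem_nhdsLT (by norm_num)
    obtain ⟨t, ht, htmem⟩ := (h3.and (eventually_of_mem hIoo fun x hx => hx)).exists
    have hB0 : B = 0 := by
      have hV1' : V (X0, Y0) = A + B := by
        have := hkey 1; rw [one_smul] at this; simpa using this
      rw [hkey, hV1'] at ht
      simp only [Complex.norm_real, Real.norm_eq_abs] at ht
      have h01 : |t| = t := abs_of_pos htmem.1
      rw [h01] at ht
      by_contra hne
      have hBpos : 0 < B := lt_of_le_of_ne hBnn (Ne.symm hne)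
      have ht2 : t ^ 2 < 1 := by nlinarith [htmem.1, htmem.2]
      nlinarith [mul_lt_mul_of_pos_right ht2 hBpos]
    refine ⟨hX, fun c => ?_, by simp⟩
    have hV1 : V (X0, Y0) = A + B := by
      have := hkey 1; rw [one_smul] at this; simpa using this
    rw [hkey c, hV1, hB0]
    ring
end

section
/- Suppose z⁰ ∈ ℂⁿ satisfies ∂W/∂z_j(z⁰) = 0 for every j with q_j ≥ 2. Then along the path z(α) = (e^{q₁α}z₁⁰,…,e^{qₙα}zₙ⁰) with α ∈ ℝ, the scalar potential satisfies V(z(α)) → 0 as α → −∞; in particular, the infimum of V over ℂⁿ is 0 (supersymmetry is restored asymptotically along a runaway direction or at a supersymmetric vacuum). -/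
open Complex Filter Topology

/-!
Differentiating the R-symmetry relation `W ∘ S_α = e^{2α} W`, where `S_α` is the diagonal scaling
`z_j ↦ e^{q_j α} z_j`, gives `∂_j W (S_α z) = e^{(2 - q_j) α} ∂_j W(z)`. Along the path
`α ↦ S_α z⁰` with real `α`, each term of `V` is therefore `e^{2(2 - q_j) α} |∂_j W(z⁰)|²`, which
either vanishes (`q_j ≥ 2`, by hypothesis) or decays as `α → −∞` (`q_j < 2`). Since `V ≥ 0`, the
limit `0` is its infimum.
-/

section RScaling

variable {ι : Type*}

noncomputable def rScaling (q : ι → ℂ) (α : ℂ) : (ι → ℂ) →L[ℂ] (ι → ℂ) :=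
  ContinuousLinearMap.pi fun k => Complex.exp (q k * α) • ContinuousLinearMap.proj k

theorem rScaling_apply (q : ι → ℂ) (α : ℂ) (z : ι → ℂ) :
    rScaling q α z = fun k => Complex.exp (q k * α) * z k :=
  rfl

theorem rScaling_single [DecidableEq ι] (q : ι → ℂ) (α : ℂ) (j : ι) :
    rScaling q α (Pi.single j 1) = Complex.exp (q j * α) • Pi.single j 1 := by
  ext k
  rcases eq_or_ne k j with rfl | hkj
  · simp [rScaling_apply]
  · simp [rScaling_apply, hkj]

theorem fderiv_comp_rScaling [Fintype ι] {W : (ι → ℂ) → ℂ} (hW : Differentiable ℂ W)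
    {q : ι → ℂ} {w α : ℂ}
    (hR : ∀ z, W (rScaling q α z) = Complex.exp (w * α) * W z) (z : ι → ℂ) :
    (fderiv ℂ W (rScaling q α z)).comp (rScaling q α) = Complex.exp (w * α) • fderiv ℂ W z := by
  have hcomp : W ∘ rScaling q α = fun z => Complex.exp (w * α) * W z := funext hR
  have hchain := fderiv_comp z (hW _) (rScaling q α).differentiableAt
  rw [(rScaling q α).fderiv, hcomp, fderiv_const_mul (hW z)] at hchain
  exact hchain.symm

theorem fderiv_rScaling_single [Fintype ι] [DecidableEq ι] {W : (ι → ℂ) → ℂ}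
    (hW : Differentiable ℂ W) {q : ι → ℂ} {w α : ℂ}
    (hR : ∀ z, W (rScaling q α z) = Complex.exp (w * α) * W z) (z : ι → ℂ) (j : ι) :
    fderiv ℂ W (rScaling q α z) (Pi.single j 1)
      = Complex.exp ((w - q j) * α) * fderiv ℂ W z (Pi.single j 1) := by
  have h := congrArg (fun T : (ι → ℂ) →L[ℂ] ℂ => T (Pi.single j 1))
    (fderiv_comp_rScaling hW hR z)
  simp only [ContinuousLinearMap.comp_apply, smul_apply, rScaling_single,
    map_smul, smul_eq_mul] at h
  apply mul_left_cancel₀ (Complex.exp_ne_zero (q j * α))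
  rw [h, ← mul_assoc, ← Complex.exp_add]
  ring_nf

end RScaling

theorem tendsto_norm_exp_mul_sq_mul_atBot {c : ℝ} (a : ℂ) (h : a = 0 ∨ 0 < c) :
    Tendsto (fun α : ℝ => ‖Complex.exp (c * α) * a‖ ^ 2) atBot (𝓝 0) := by
  rcases h with rfl | hc
  · simp
  have hexp : Tendsto (fun α : ℝ => Real.exp (c * α)) atBot (𝓝 0) :=
    Real.tendsto_exp_atBot.comp (tendsto_id.const_mul_atBot hc)
  simpa [norm_mul, mul_pow, Complex.norm_exp, ← Complex.ofReal_mul] using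
    (hexp.pow 2).mul_const (‖a‖ ^ 2)

theorem isGLB_range_of_tendsto {α β γ : Type*} [Preorder γ] [TopologicalSpace γ]
    [OrderClosedTopology γ] {l : Filter β} [l.NeBot] {V : α → γ} {path : β → α} {a : γ}
    (hV : ∀ z, a ≤ V z) (h : Tendsto (V ∘ path) l (𝓝 a)) : IsGLB (Set.range V) a :=
  ⟨Set.forall_mem_range.2 hV, fun _ hb => ge_of_tendsto' h fun _ => hb ⟨_, rfl⟩⟩

/-- Let `W : ℂⁿ → ℂ` be holomorphic with R-charge 2 under the complexified
R-symmetry, and let `V(z) = Σⱼ |∂W/∂z_j(z)|²`. If `z⁰` satisfies `∂W/∂z_j(z⁰) = 0` for every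
`j` with `q_j ≥ 2`, then along the path `z(α) = (e^{q₁α}z₁⁰,…,e^{qₙα}zₙ⁰)`, `α ∈ ℝ`, one has
`V(z(α)) → 0` as `α → −∞`; in particular `inf V = 0` over `ℂⁿ`. -/
theorem runaway_atBot_restores_susy
    (n : ℕ) (W : (Fin n → ℂ) → ℂ) (hW : Differentiable ℂ W)
    (q : Fin n → ℝ)
    (hR : ∀ (α : ℂ) (z : Fin n → ℂ),
      W (fun j => Complex.exp ((q j : ℂ) * α) * z j) = Complex.exp (2 * α) * W z)
    (V : (Fin n → ℂ) → ℝ)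
    (hV : ∀ z, V z = ∑ j, ‖fderiv ℂ W z (Pi.single j 1)‖ ^ 2)
    (z0 : Fin n → ℂ)
    (hz0 : ∀ j, 2 ≤ q j → fderiv ℂ W z0 (Pi.single j 1) = 0) :
    Tendsto (fun α : ℝ => V (fun j => Complex.exp ((q j : ℂ) * (α : ℂ)) * z0 j))
      atBot (nhds 0) ∧
    IsGLB (Set.range V) 0 := by
  have hpath : ∀ α : ℝ, V (fun j => Complex.exp ((q j : ℂ) * (α : ℂ)) * z0 j)
      = ∑ j, ‖Complex.exp (((2 - q j : ℝ) : ℂ) * α) * fderiv ℂ W z0 (Pi.single j 1)‖ ^ 2 := by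
    intro α
    rw [hV, ← rScaling_apply]
    push_cast
    simp only [fderiv_rScaling_single hW (hR α)]
  have hT : Tendsto (fun α : ℝ => V (fun j => Complex.exp ((q j : ℂ) * (α : ℂ)) * z0 j))
      atBot (𝓝 0) := by
    simp only [hpath]
    rw [← Finset.sum_const_zero (s := (Finset.univ : Finset (Fin n))) (M := ℝ)]
    refine tendsto_finsetSum _ fun j _ => tendsto_norm_exp_mul_sq_mul_atBot _ ?_
    rcases le_or_gt 2 (q j) with hq | hq
    · exact .inl (hz0 j hq)
    · exact .inr (sub_pos.2 hq)
  exact ⟨hT, isGLB_range_of_tendsto (fun z => hV z ▸ by positivity) hT⟩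
end

section
/- Suppose z⁰ ∈ ℂⁿ satisfies ∂W/∂z_j(z⁰) = 0 for every j with q_j ≤ 2. Then along the path z(α) = (e^{q₁α}z₁⁰,…,e^{qₙα}zₙ⁰) with α ∈ ℝ, the scalar potential satisfies V(z(α)) → 0 as α → +∞; in particular, the infimum of V over ℂⁿ is 0 (supersymmetry is restored asymptotically along a runaway direction or at a supersymmetric vacuum). -/
open Complex Filter Topology

/-!
Differentiating the R-symmetry identity `W(e^{qα}·z) = e^{2α} W(z)` in `z` shows that `∂ⱼW`
has R-charge `2 - qⱼ`: `∂ⱼW(e^{qα}·z) = e^{(2 - qⱼ)α} ∂ⱼW(z)`. Along the real path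
`α ↦ e^{qα}·z⁰` every term `|∂ⱼW|²` of the potential therefore either vanishes identically
(`qⱼ ≤ 2`, by hypothesis) or decays like `e^{2(2 - qⱼ)α}` (`qⱼ > 2`). Since `V ≥ 0`, its values
tending to `0` make `0` the infimum.
-/

theorem isGLB_range_of_tendsto_comp {X Y α : Type*} [TopologicalSpace α] [Preorder α]
    [OrderClosedTopology α] {f : X → α} {a : α} (ha : ∀ x, a ≤ f x) {l : Filter Y} [l.NeBot]
    {g : Y → X} (h : Tendsto (f ∘ g) l (𝓝 a)) : IsGLB (Set.range f) a :=
  ⟨Set.forall_mem_range.2 ha, fun _ hb => ge_of_tendsto' h fun _ => hb (Set.mem_range_self _)⟩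

theorem fderiv_apply_map_of_comp_eq_smul {𝕜 E F : Type*} [NontriviallyNormedField 𝕜]
    [NormedAddCommGroup E] [NormedSpace 𝕜 E] [NormedAddCommGroup F] [NormedSpace 𝕜 F]
    {W : E → F} {L : E →L[𝕜] E} {c : 𝕜} (hWL : ∀ z, W (L z) = c • W z) {z : E}
    (hWz : DifferentiableAt 𝕜 W z) (hWLz : DifferentiableAt 𝕜 W (L z)) (v : E) :
    fderiv 𝕜 W (L z) (L v) = c • fderiv 𝕜 W z v := by
  have hcomp : HasFDerivAt (fun x => W (L x)) ((fderiv 𝕜 W (L z)).comp L) z :=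
    hWLz.hasFDerivAt.comp z L.hasFDerivAt
  have hsmul : HasFDerivAt (fun x => W (L x)) (c • fderiv 𝕜 W z) z := by
    rw [funext hWL]
    exact hWz.hasFDerivAt.const_smul c
  simpa using congr($(hcomp.unique hsmul) v)

section RSymmetry

variable {ι : Type*}

noncomputable def rSymmetry (q : ι → ℝ) (α : ℂ) : (ι → ℂ) →L[ℂ] (ι → ℂ) :=
  ContinuousLinearMap.pi fun k => exp (q k * α) • ContinuousLinearMap.proj k

theorem rSymmetry_apply (q : ι → ℝ) (α : ℂ) (z : ι → ℂ) :
    rSymmetry q α z = fun j => exp (q j * α) * z j :=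
  rfl

variable [DecidableEq ι]

theorem rSymmetry_single (q : ι → ℝ) (α : ℂ) (j : ι) :
    rSymmetry q α (Pi.single j 1) = exp (q j * α) • Pi.single j 1 := by
  ext k
  rcases eq_or_ne k j with rfl | hk
  · simp [rSymmetry_apply]
  · simp [rSymmetry_apply, hk]

variable [Fintype ι]

noncomputable def scalarPotential (W : (ι → ℂ) → ℂ) (z : ι → ℂ) : ℝ :=
  ∑ j, ‖fderiv ℂ W z (Pi.single j 1)‖ ^ 2

theorem scalarPotential_nonneg (W : (ι → ℂ) → ℂ) (z : ι → ℂ) : 0 ≤ scalarPotential W z := by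
  unfold scalarPotential
  positivity

variable {W : (ι → ℂ) → ℂ} {q : ι → ℝ} {d : ℝ}

theorem fderiv_rSymmetry_single (hW : Differentiable ℂ W)
    (hR : ∀ α z, W (rSymmetry q α z) = exp (d * α) * W z) (α : ℂ) (z : ι → ℂ) (j : ι) :
    fderiv ℂ W (rSymmetry q α z) (Pi.single j 1)
      = exp ((d - q j) * α) * fderiv ℂ W z (Pi.single j 1) := by
  have hsingle : rSymmetry q α (exp (-(q j * α)) • Pi.single j 1) = Pi.single j 1 := by
    rw [map_smul, rSymmetry_single, smul_smul, ← exp_add, neg_add_cancel, exp_zero, one_smul]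
  calc fderiv ℂ W (rSymmetry q α z) (Pi.single j 1)
      = exp (d * α) • fderiv ℂ W z (exp (-(q j * α)) • Pi.single j 1) := by
        rw [← fderiv_apply_map_of_comp_eq_smul (hR α) (hW z) (hW _), hsingle]
    _ = exp ((d - q j) * α) * fderiv ℂ W z (Pi.single j 1) := by
        rw [map_smul, smul_eq_mul, smul_eq_mul, ← mul_assoc, ← exp_add]
        ring_nf

theorem norm_fderiv_rSymmetry_single (hW : Differentiable ℂ W)
    (hR : ∀ α z, W (rSymmetry q α z) = exp (d * α) * W z) (α : ℝ) (z : ι → ℂ) (j : ι) :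
    ‖fderiv ℂ W (rSymmetry q α z) (Pi.single j 1)‖
      = Real.exp ((d - q j) * α) * ‖fderiv ℂ W z (Pi.single j 1)‖ := by
  rw [fderiv_rSymmetry_single hW hR, norm_mul, norm_exp]
  norm_cast

theorem tendsto_norm_fderiv_rSymmetry_single_atTop (hW : Differentiable ℂ W)
    (hR : ∀ α z, W (rSymmetry q α z) = exp (d * α) * W z) {z : ι → ℂ} {j : ι}
    (hz : q j ≤ d → fderiv ℂ W z (Pi.single j 1) = 0) :
    Tendsto (fun α : ℝ => ‖fderiv ℂ W (rSymmetry q α z) (Pi.single j 1)‖) atTop (𝓝 0) := by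
  simp only [norm_fderiv_rSymmetry_single hW hR]
  rcases le_or_gt (q j) d with hq | hq
  · simp [hz hq]
  · have hexp : Tendsto (fun α : ℝ => Real.exp ((d - q j) * α)) atTop (𝓝 0) :=
      Real.tendsto_exp_atBot.comp (tendsto_id.const_mul_atTop_of_neg (by linarith))
    simpa using hexp.mul_const ‖fderiv ℂ W z (Pi.single j 1)‖

theorem tendsto_scalarPotential_rSymmetry_atTop (hW : Differentiable ℂ W)
    (hR : ∀ α z, W (rSymmetry q α z) = exp (d * α) * W z) {z : ι → ℂ}
    (hz : ∀ j, q j ≤ d → fderiv ℂ W z (Pi.single j 1) = 0) :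
    Tendsto (fun α : ℝ => scalarPotential W (rSymmetry q α z)) atTop (𝓝 0) := by
  simpa [scalarPotential] using tendsto_finsetSum Finset.univ fun j _ =>
    (tendsto_norm_fderiv_rSymmetry_single_atTop hW hR (hz j)).pow 2

end RSymmetry

/-- Let `W : ℂⁿ → ℂ` be holomorphic with R-charge 2 under the complexified
R-symmetry, and let `V(z) = Σⱼ |∂W/∂z_j(z)|²`. If `z⁰` satisfies `∂W/∂z_j(z⁰) = 0` for every
`j` with `q_j ≤ 2`, then along the path `z(α) = (e^{q₁α}z₁⁰,…,e^{qₙα}zₙ⁰)`, `α ∈ ℝ`, one has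
`V(z(α)) → 0` as `α → +∞`; in particular `inf V = 0` over `ℂⁿ`. -/
theorem runaway_atTop_restores_susy
    (n : ℕ) (W : (Fin n → ℂ) → ℂ) (hW : Differentiable ℂ W)
    (q : Fin n → ℝ)
    (hR : ∀ (α : ℂ) (z : Fin n → ℂ),
      W (fun j => Complex.exp ((q j : ℂ) * α) * z j) = Complex.exp (2 * α) * W z)
    (V : (Fin n → ℂ) → ℝ)
    (hV : ∀ z, V z = ∑ j, ‖fderiv ℂ W z (Pi.single j 1)‖ ^ 2)
    (z0 : Fin n → ℂ)
    (hz0 : ∀ j, q j ≤ 2 → fderiv ℂ W z0 (Pi.single j 1) = 0) :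
    Tendsto (fun α : ℝ => V (fun j => Complex.exp ((q j : ℂ) * (α : ℂ)) * z0 j))
      atTop (nhds 0) ∧
    IsGLB (Set.range V) 0 := by
  obtain rfl : V = scalarPotential W := funext hV
  have hR' : ∀ α z, W (rSymmetry q α z) = exp ((2 : ℝ) * α) * W z := by
    simpa [rSymmetry_apply] using hR
  have hpath := tendsto_scalarPotential_rSymmetry_atTop hW hR' (by exact_mod_cast hz0)
  exact ⟨hpath, isGLB_range_of_tendsto_comp (scalarPotential_nonneg W) hpath⟩
end

section
/- If there exists ε > 0 such that V(z) ≥ ε for all z ∈ ℂⁿ (supersymmetry is broken with no runaway direction), then the subsystem of equations {∂W/∂z_j = 0 : q_j ≥ 2} has no solution in ℂⁿ, and the subsystem {∂W/∂z_j = 0 : q_j ≤ 2} also has no solution in ℂⁿ. -/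
open Complex Filter Topology

/-! Along the orbit `t ↦ (exp(q₁ t) z₁, …, exp(qₙ t) zₙ)` of the R-symmetry, charge 2 forces
`∂ⱼW` to scale by `exp((2 - qⱼ) t)`. If the `∂ⱼW` with `qⱼ ≥ 2` vanish at `z`, the remaining ones
have `qⱼ < 2` and die as `t → -∞`, so `V → 0` along a runaway direction, contradicting `V ≥ ε`;
the case `qⱼ ≤ 2` is the same with `t → +∞`. -/

theorem fderiv_map_apply_of_comp_eq_mul {𝕜 E : Type*} [NontriviallyNormedField 𝕜]
    [NormedAddCommGroup E] [NormedSpace 𝕜 E] {W : E → 𝕜} (hW : Differentiable 𝕜 W)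
    (L : E →L[𝕜] E) (c : 𝕜) (hWL : ∀ w, W (L w) = c * W w) (z v : E) :
    fderiv 𝕜 W (L z) (L v) = c * fderiv 𝕜 W z v := by
  have h : fderiv 𝕜 (W ∘ L) z = c • fderiv 𝕜 W z := by
    rw [show W ∘ L = fun w => c * W w from funext hWL, fderiv_const_mul (hW z)]
  simpa [fderiv_comp z (hW (L z)) L.differentiableAt] using DFunLike.congr_fun h v

section ChargeScaling

variable {ι : Type*}

noncomputable def chargeScaling (q : ι → ℝ) (α : ℂ) : (ι → ℂ) →L[ℂ] (ι → ℂ) :=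
  ContinuousLinearMap.pi fun k => cexp (q k * α) • ContinuousLinearMap.proj k

@[simp]
theorem chargeScaling_apply (q : ι → ℝ) (α : ℂ) (z : ι → ℂ) :
    chargeScaling q α z = fun k => cexp (q k * α) * z k := rfl

variable [DecidableEq ι]

theorem chargeScaling_single (q : ι → ℝ) (α : ℂ) (j : ι) :
    chargeScaling q α (Pi.single j 1) = cexp (q j * α) • Pi.single j 1 := by
  ext k
  by_cases h : k = j
  · subst h; simp
  · simp [h]

variable [Fintype ι]

theorem fderiv_chargeScaling_single {W : (ι → ℂ) → ℂ} (hW : Differentiable ℂ W)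
    {q : ι → ℝ} {d : ℂ} (hR : ∀ α z, W (chargeScaling q α z) = cexp (d * α) * W z)
    (α : ℂ) (z : ι → ℂ) (j : ι) :
    fderiv ℂ W (chargeScaling q α z) (Pi.single j 1)
      = cexp ((d - q j) * α) * fderiv ℂ W z (Pi.single j 1) := by
  have h := fderiv_map_apply_of_comp_eq_mul hW _ _ (hR α) z (Pi.single j 1)
  rw [chargeScaling_single, map_smul, smul_eq_mul] at h
  apply mul_left_cancel₀ (Complex.exp_ne_zero (q j * α))
  rw [h, ← mul_assoc, ← Complex.exp_add]
  ring_nf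

theorem norm_fderiv_chargeScaling_ofReal_single {W : (ι → ℂ) → ℂ} (hW : Differentiable ℂ W)
    {q : ι → ℝ} {d : ℝ} (hR : ∀ α z, W (chargeScaling q α z) = cexp (d * α) * W z)
    (t : ℝ) (z : ι → ℂ) (j : ι) :
    ‖fderiv ℂ W (chargeScaling q t z) (Pi.single j 1)‖
      = Real.exp ((d - q j) * t) * ‖fderiv ℂ W z (Pi.single j 1)‖ := by
  rw [fderiv_chargeScaling_single hW hR, norm_mul, ← norm_exp_ofReal]
  push_cast
  rfl

theorem tendsto_sum_norm_fderiv_chargeScaling_zero {W : (ι → ℂ) → ℂ} (hW : Differentiable ℂ W)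
    {q : ι → ℝ} {d : ℝ} (hR : ∀ α z, W (chargeScaling q α z) = cexp (d * α) * W z)
    (z : ι → ℂ) {l : Filter ℝ}
    (hdecay : ∀ j, fderiv ℂ W z (Pi.single j 1) ≠ 0 → Tendsto (fun t => (d - q j) * t) l atBot) :
    Tendsto (fun t : ℝ => ∑ j, ‖fderiv ℂ W (chargeScaling q t z) (Pi.single j 1)‖ ^ 2) l (𝓝 0) := by
  rw [← Finset.sum_const_zero (s := (Finset.univ : Finset ι)) (M := ℝ)]
  refine tendsto_finsetSum _ fun j _ => ?_
  simp_rw [norm_fderiv_chargeScaling_ofReal_single hW hR]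
  by_cases hj : fderiv ℂ W z (Pi.single j 1) = 0
  · simpa [hj] using tendsto_const_nhds
  · simpa using ((Real.tendsto_exp_atBot.comp (hdecay j hj)).mul_const _).pow 2

end ChargeScaling

/-- Let `W : ℂⁿ → ℂ` be holomorphic with R-charge 2 under the complexified
R-symmetry, and let `V(z) = Σⱼ |∂W/∂z_j(z)|²`. If there is `ε > 0` with `V(z) ≥ ε` for all
`z` (SUSY broken with no runaway), then the subsystem `{∂W/∂z_j = 0 : q_j ≥ 2}` has no
solution in `ℂⁿ`, and the subsystem `{∂W/∂z_j = 0 : q_j ≤ 2}` has no solution either. -/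
theorem no_runaway_necessary_condition
    (n : ℕ) (W : (Fin n → ℂ) → ℂ) (hW : Differentiable ℂ W)
    (q : Fin n → ℝ)
    (hR : ∀ (α : ℂ) (z : Fin n → ℂ),
      W (fun j => Complex.exp ((q j : ℂ) * α) * z j) = Complex.exp (2 * α) * W z)
    (V : (Fin n → ℂ) → ℝ)
    (hV : ∀ z, V z = ∑ j, ‖fderiv ℂ W z (Pi.single j 1)‖ ^ 2)
    (ε : ℝ) (hε : 0 < ε) (hbound : ∀ z, ε ≤ V z) :
    (¬ ∃ z : Fin n → ℂ, ∀ j, 2 ≤ q j → fderiv ℂ W z (Pi.single j 1) = 0) ∧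
    (¬ ∃ z : Fin n → ℂ, ∀ j, q j ≤ 2 → fderiv ℂ W z (Pi.single j 1) = 0) := by
  have hR' : ∀ α z, W (chargeScaling q α z) = cexp (((2 : ℝ) : ℂ) * α) * W z := by
    simpa using hR
  have no_flow_to_zero : ∀ z (l : Filter ℝ) [l.NeBot],
      (∀ j, fderiv ℂ W z (Pi.single j 1) ≠ 0 → Tendsto (fun t => (2 - q j) * t) l atBot) →
      False := by
    intro z l _ hdecay
    obtain ⟨t, ht⟩ := ((tendsto_sum_norm_fderiv_chargeScaling_zero hW hR' z hdecay).eventually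
      (gt_mem_nhds hε)).exists
    exact (hbound _).not_gt (hV _ ▸ ht)
  constructor
  · rintro ⟨z, hz⟩
    refine no_flow_to_zero z atBot fun j hj => ?_
    have : 0 < 2 - q j := sub_pos.2 (not_le.1 (mt (hz j) hj))
    exact (tendsto_const_mul_atBot_of_pos this).2 tendsto_id
  · rintro ⟨z, hz⟩
    refine no_flow_to_zero z atTop fun j hj => ?_
    have : 2 - q j < 0 := sub_neg.2 (not_le.1 (mt (hz j) hj))
    exact (tendsto_const_mul_atBot_of_neg this).2 tendsto_id
end

section
/- For every z ∈ ℂ⁵, V(z) > 0; equivalently, the equations ∂W/∂z_i(z) = 0 for i = 1,…,5 (in particular λ(z₄z₅ − m²) = 0, μz₄ = 0, νz₅ = 0) have no common solution, so the CDFM model has no supersymmetric vacuum. -/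
/-! The partial derivatives in the directions `z₁, z₂, z₃` are `λ (z₄z₅ − m²)`, `μ z₄` and
`ν z₅`. If the last two vanish then `z₄ = z₅ = 0`, and the first becomes `−λ m² ≠ 0`: the F-term
conditions are incompatible, so some `|∂W/∂zᵢ|²` is positive. -/

open Finset

theorem fderiv_apply_eq_of_affine_on_line {𝕜 E F : Type*} [NontriviallyNormedField 𝕜]
    [NormedAddCommGroup E] [NormedSpace 𝕜 E] [NormedAddCommGroup F] [NormedSpace 𝕜 F]
    {f : E → F} {x v : E} {c : F} (hf : DifferentiableAt 𝕜 f x)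
    (hline : ∀ t : 𝕜, f (x + t • v) = f x + t • c) :
    fderiv 𝕜 f x v = c := by
  have hcomp : HasDerivAt (fun t : 𝕜 => f (x + t • v)) (fderiv 𝕜 f x v) 0 :=
    hf.hasFDerivAt.hasLineDerivAt v
  have haff : HasDerivAt (fun t : 𝕜 => f (x + t • v)) c 0 := by
    simpa [funext hline] using ((hasDerivAt_id (0 : 𝕜)).smul_const c).const_add (f x)
  exact hcomp.unique haff

-- The fields `z₁, …, z₅` are `z 0, …, z 4`.
def cdfmSuperpotential (lam mu nu m sig : ℂ) (z : Fin 5 → ℂ) : ℂ :=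
  lam * z 0 * (z 3 * z 4 - m ^ 2) + mu * z 1 * z 3 + nu * z 2 * z 4 + sig * z 4 ^ 3

namespace cdfmSuperpotential

variable (lam mu nu m sig : ℂ) (z : Fin 5 → ℂ)

theorem differentiable : Differentiable ℂ (cdfmSuperpotential lam mu nu m sig) := by
  unfold cdfmSuperpotential
  fun_prop

theorem fderiv_single_zero :
    fderiv ℂ (cdfmSuperpotential lam mu nu m sig) z (Pi.single 0 1) =
      lam * (z 3 * z 4 - m ^ 2) :=
  fderiv_apply_eq_of_affine_on_line (differentiable lam mu nu m sig z) fun t => by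
    simp [cdfmSuperpotential]
    ring

theorem fderiv_single_one :
    fderiv ℂ (cdfmSuperpotential lam mu nu m sig) z (Pi.single 1 1) = mu * z 3 :=
  fderiv_apply_eq_of_affine_on_line (differentiable lam mu nu m sig z) fun t => by
    simp [cdfmSuperpotential]
    ring

theorem fderiv_single_two :
    fderiv ℂ (cdfmSuperpotential lam mu nu m sig) z (Pi.single 2 1) = nu * z 4 :=
  fderiv_apply_eq_of_affine_on_line (differentiable lam mu nu m sig z) fun t => by
    simp [cdfmSuperpotential]
    ring

theorem exists_fderiv_single_ne_zero {lam mu nu m : ℂ} (hlam : lam ≠ 0) (hmu : mu ≠ 0)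
    (hnu : nu ≠ 0) (hm : m ≠ 0) (sig : ℂ) (z : Fin 5 → ℂ) :
    ∃ i, fderiv ℂ (cdfmSuperpotential lam mu nu m sig) z (Pi.single i 1) ≠ 0 := by
  by_cases h3 : z 3 = 0
  · by_cases h4 : z 4 = 0
    · exact ⟨0, by simp [fderiv_single_zero, h3, h4, hlam, hm]⟩
    · exact ⟨2, by simp [fderiv_single_two, hnu, h4]⟩
  · exact ⟨1, by simp [fderiv_single_one, hmu, h3]⟩

end cdfmSuperpotential

theorem cdfm_no_susy_vacuum_general
    (lam mu nu m sig : ℝ)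
    (hlam : 0 < lam) (hmu : 0 < mu) (hnu : 0 < nu) (hm : 0 < m)
    (W : (Fin 5 → ℂ) → ℂ)
    (hW : ∀ z, W z = (lam : ℂ) * z 0 * (z 3 * z 4 - (m : ℂ) ^ 2) +
      (mu : ℂ) * z 1 * z 3 + (nu : ℂ) * z 2 * z 4 + (sig : ℂ) * (z 4) ^ 3)
    (V : (Fin 5 → ℂ) → ℝ)
    (hV : ∀ z, V z = ∑ i, ‖fderiv ℂ W z (Pi.single i 1)‖ ^ 2) :
    (∀ z, 0 < V z) ∧
    ¬ ∃ z : Fin 5 → ℂ, ∀ i, fderiv ℂ W z (Pi.single i 1) = 0 := by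
  obtain rfl : W = cdfmSuperpotential lam mu nu m sig := funext hW
  have hcrit := cdfmSuperpotential.exists_fderiv_single_ne_zero (sig := sig)
    (Complex.ofReal_ne_zero.2 hlam.ne') (Complex.ofReal_ne_zero.2 hmu.ne')
    (Complex.ofReal_ne_zero.2 hnu.ne') (Complex.ofReal_ne_zero.2 hm.ne')
  refine ⟨fun z => ?_, fun ⟨z, hz⟩ => ?_⟩
  · obtain ⟨i, hi⟩ := hcrit z
    rw [hV]
    exact sum_pos' (fun _ _ => by positivity) ⟨i, mem_univ i, by positivity⟩
  · obtain ⟨i, hi⟩ := hcrit z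
    exact hi (hz i)

/-- The CDFM model: five chiral fields `z₁,…,z₅`, superpotential
`W(z) = λ z₁ (z₄z₅ − m²) + μ z₂ z₄ + ν z₃ z₅ + σ z₅³` with positive real parameters, scalar
potential `V(z) = Σᵢ |∂W/∂z_i(z)|²`. For every `z ∈ ℂ⁵` one has `V(z) > 0`; equivalently
the equations `∂W/∂z_i(z) = 0`, `i = 1,…,5`, have no common solution: no SUSY vacuum. -/
theorem cdfm_no_susy_vacuum
    (lam mu nu m sig : ℝ)
    (hlam : 0 < lam) (hmu : 0 < mu) (hnu : 0 < nu) (hm : 0 < m) (hsig : 0 < sig)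
    (W : (Fin 5 → ℂ) → ℂ)
    (hW : ∀ z, W z = (lam : ℂ) * z 0 * (z 3 * z 4 - (m : ℂ) ^ 2) +
      (mu : ℂ) * z 1 * z 3 + (nu : ℂ) * z 2 * z 4 + (sig : ℂ) * (z 4) ^ 3)
    (V : (Fin 5 → ℂ) → ℝ)
    (hV : ∀ z, V z = ∑ i, ‖fderiv ℂ W z (Pi.single i 1)‖ ^ 2) :
    (∀ z, 0 < V z) ∧
    ¬ ∃ z : Fin 5 → ℂ, ∀ i, fderiv ℂ W z (Pi.single i 1) = 0 :=
  cdfm_no_susy_vacuum_general lam mu nu m sig hlam hmu hnu hm W hW V hV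
end

section
/- Let λ, μ, ν, m be positive reals with μν ≤ λ²m². Then for all u, v ∈ ℂ: λ²|uv − m²|² + μ²|u|² + ν²|v|² ≥ 2μνm² − μ²ν²/λ². Consequently, for the CDFM model the scalar potential satisfies V(z) ≥ 2μνm² − μ²ν²/λ² for all z ∈ ℂ⁵. -/
open Complex Filter Topology

lemma cdfm_aux (lam mu nu m : ℝ) (hlam : 0 < lam) (hmu : 0 < mu) (hnu : 0 < nu)
    (hm : 0 < m) (hcond : mu * nu ≤ lam ^ 2 * m ^ 2) (u v : ℂ) :
    2 * mu * nu * m ^ 2 - mu ^ 2 * nu ^ 2 / lam ^ 2 ≤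
      lam ^ 2 * ‖u * v - (m : ℂ) ^ 2‖ ^ 2 + mu ^ 2 * ‖u‖ ^ 2 + nu ^ 2 * ‖v‖ ^ 2 := by
  set a := ‖u‖ with ha'
  set b := ‖v‖ with hb'
  have ha : 0 ≤ a := norm_nonneg u
  have hb : 0 ≤ b := norm_nonneg v
  have h1 : |a * b - m ^ 2| ≤ ‖u * v - (m:ℂ)^2‖ := by
    have := abs_norm_sub_norm_le (u * v) ((m:ℂ)^2)
    simpa [norm_mul, norm_pow, Complex.norm_real, abs_of_pos hm] using this
  have h2 : (a * b - m ^ 2) ^ 2 ≤ ‖u * v - (m:ℂ)^2‖ ^ 2 := by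
    calc (a * b - m ^ 2) ^ 2 = |a * b - m ^ 2| ^ 2 := (_root_.sq_abs _).symm
    _ ≤ _ := by gcongr
  have hlam2 : (0:ℝ) < lam ^ 2 := by positivity
  rw [sub_le_iff_le_add, ← sub_le_iff_le_add', le_div_iff₀ hlam2]
  nlinarith [sq_nonneg (lam^2 * (a*b - m^2) + mu*nu), sq_nonneg (mu*a - nu*b),
    mul_le_mul_of_nonneg_left h2 hlam2.le, sq_nonneg (mu*a + nu*b), mul_nonneg ha hb]

open ContinuousLinearMap in
lemma cdfm_deriv (lam mu nu m sig : ℝ) (z : Fin 5 → ℂ) :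
    ∃ D : (Fin 5 → ℂ) →L[ℂ] ℂ,
      HasFDerivAt (fun z : Fin 5 → ℂ => (lam : ℂ) * z 0 * (z 3 * z 4 - (m : ℂ) ^ 2) +
        (mu : ℂ) * z 1 * z 3 + (nu : ℂ) * z 2 * z 4 + (sig : ℂ) * (z 4) ^ 3) D z ∧
      D (Pi.single 0 1) = (lam : ℂ) * (z 3 * z 4 - (m:ℂ)^2) ∧
      D (Pi.single 1 1) = (mu : ℂ) * z 3 ∧
      D (Pi.single 2 1) = (nu : ℂ) * z 4 := by
  have hp : ∀ i : Fin 5, HasFDerivAt (𝕜 := ℂ) (fun w : Fin 5 → ℂ => w i)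
      (ContinuousLinearMap.proj i) z := fun i => hasFDerivAt_apply (𝕜 := ℂ) i z
  have hA := ((hasFDerivAt_const (lam:ℂ) z).mul (hp 0)).mul
      (((hp 3).mul (hp 4)).sub (hasFDerivAt_const ((m:ℂ)^2) z))
  have hB := ((hasFDerivAt_const (mu:ℂ) z).mul (hp 1)).mul (hp 3)
  have hC := ((hasFDerivAt_const (nu:ℂ) z).mul (hp 2)).mul (hp 4)
  have hDt := (hasFDerivAt_const (sig:ℂ) z).mul (((hp 4).mul (hp 4)).mul (hp 4))
  refine ⟨((lam : ℂ) * z 0) • (z 3 • proj 4 + z 4 • proj 3 - 0) +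
      (z 3 * z 4 - (m:ℂ) ^ 2) • ((lam:ℂ) • proj 0 + z 0 • 0) +
      (((mu:ℂ) * z 1) • proj 3 + z 3 • ((mu:ℂ) • proj 1 + z 1 • 0)) +
      (((nu:ℂ) * z 2) • proj 4 + z 4 • ((nu:ℂ) • proj 2 + z 2 • 0)) +
      ((sig:ℂ) • ((z 4 * z 4) • proj 4 + z 4 • (z 4 • proj 4 + z 4 • proj 4)) +
        (z 4 * z 4 * z 4) • 0), ?_, ?_, ?_, ?_⟩
  · have hfun : (fun z : Fin 5 → ℂ => (lam : ℂ) * z 0 * (z 3 * z 4 - (m : ℂ) ^ 2) +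
        (mu : ℂ) * z 1 * z 3 + (nu : ℂ) * z 2 * z 4 + (sig : ℂ) * (z 4) ^ 3) =
        (fun z : Fin 5 → ℂ => (lam : ℂ) * z 0 * (z 3 * z 4 - (m : ℂ) ^ 2) +
        (mu : ℂ) * z 1 * z 3 + (nu : ℂ) * z 2 * z 4 + (sig : ℂ) * (z 4 * z 4 * z 4)) := by
      funext y; ring
    rw [hfun]
    exact ((hA.add hB).add hC).add hDt
  all_goals
    simp only [ContinuousLinearMap.add_apply, ContinuousLinearMap.sub_apply,
      ContinuousLinearMap.smul_apply, ContinuousLinearMap.zero_apply,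
      ContinuousLinearMap.proj_apply, smul_eq_mul]
    simp (config := { decide := true }) only [Pi.single_apply, if_true, if_false,
      mul_one, mul_zero, add_zero, zero_add]
    ring

/-- Let `λ, μ, ν, m > 0` with `μν ≤ λ²m²`. Then for all `u, v ∈ ℂ`:
`λ²|uv − m²|² + μ²|u|² + ν²|v|² ≥ 2μνm² − μ²ν²/λ². Consequently the CDFM scalar potential
satisfies `V(z) ≥ 2μνm² − μ²ν²/λ²` for all `z ∈ ℂ⁵`. -/
theorem cdfm_lower_bound
    (lam mu nu m sig : ℝ)
    (hlam : 0 < lam) (hmu : 0 < mu) (hnu : 0 < nu) (hm : 0 < m) (hsig : 0 < sig)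
    (hcond : mu * nu ≤ lam ^ 2 * m ^ 2)
    (W : (Fin 5 → ℂ) → ℂ)
    (hW : ∀ z, W z = (lam : ℂ) * z 0 * (z 3 * z 4 - (m : ℂ) ^ 2) +
      (mu : ℂ) * z 1 * z 3 + (nu : ℂ) * z 2 * z 4 + (sig : ℂ) * (z 4) ^ 3)
    (V : (Fin 5 → ℂ) → ℝ)
    (hV : ∀ z, V z = ∑ i, ‖fderiv ℂ W z (Pi.single i 1)‖ ^ 2) :
    (∀ u v : ℂ,
      2 * mu * nu * m ^ 2 - mu ^ 2 * nu ^ 2 / lam ^ 2 ≤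
        lam ^ 2 * ‖u * v - (m : ℂ) ^ 2‖ ^ 2 + mu ^ 2 * ‖u‖ ^ 2 + nu ^ 2 * ‖v‖ ^ 2) ∧
    (∀ z : Fin 5 → ℂ, 2 * mu * nu * m ^ 2 - mu ^ 2 * nu ^ 2 / lam ^ 2 ≤ V z) := by
  constructor
  · intro u v
    exact cdfm_aux lam mu nu m hlam hmu hnu hm hcond u v
  · intro z
    have hWe : W = fun z : Fin 5 → ℂ => (lam : ℂ) * z 0 * (z 3 * z 4 - (m : ℂ) ^ 2) +
        (mu : ℂ) * z 1 * z 3 + (nu : ℂ) * z 2 * z 4 + (sig : ℂ) * (z 4) ^ 3 := funext hW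
    subst hWe
    obtain ⟨D, hD, h0, h1, h2⟩ := cdfm_deriv lam mu nu m sig z
    rw [hV z, Fin.sum_univ_five, hD.fderiv, h0, h1, h2]
    have key := cdfm_aux lam mu nu m hlam hmu hnu hm hcond (z 3) (z 4)
    have e0 : ‖(lam:ℂ) * (z 3 * z 4 - (m:ℂ)^2)‖ ^ 2 = lam ^ 2 * ‖z 3 * z 4 - (m:ℂ)^2‖ ^ 2 := by
      rw [norm_mul, mul_pow, Complex.norm_real, Real.norm_eq_abs, abs_of_pos hlam]
    have e1 : ‖(mu:ℂ) * z 3‖ ^ 2 = mu ^ 2 * ‖z 3‖ ^ 2 := by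
      rw [norm_mul, mul_pow, Complex.norm_real, Real.norm_eq_abs, abs_of_pos hmu]
    have e2 : ‖(nu:ℂ) * z 4‖ ^ 2 = nu ^ 2 * ‖z 4‖ ^ 2 := by
      rw [norm_mul, mul_pow, Complex.norm_real, Real.norm_eq_abs, abs_of_pos hnu]
    rw [e0, e1, e2]
    have n3 : (0:ℝ) ≤ ‖D (Pi.single 3 1)‖ ^ 2 := by positivity
    have n4 : (0:ℝ) ≤ ‖D (Pi.single 4 1)‖ ^ 2 := by positivity
    linarith
end

section
/- Assume 0 < μν < λ²m² and set r = √(m²/(μν) − 1/λ²) > 0. For every θ ∈ ℝ and every t ∈ ℂ, the point z₁ = t, z₂ = −λtr e^{−iθ}, z₃ = −λtr e^{iθ} − (3σμ²r²/ν) e^{−2iθ}, z₄ = νr e^{iθ}, z₅ = μr e^{−iθ} satisfies ∂W/∂z₄(z) = ∂W/∂z₅(z) = 0 and V(z) = 2μνm² − μ²ν²/λ². Together with the lower bound V ≥ 2μνm² − μ²ν²/λ², this 3-real-parameter family consists of global minima of V, on which z₄ ≠ 0 and z₅ ≠ 0, so the R-symmetry is spontaneously broken everywhere on this pseudomoduli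 space. -/
/-!
Only the F-terms `λ(z₄z₅ − m²)`, `μz₄`, `νz₅` matter for the lower bound. With `s = |z₄||z₅|`,
the reverse triangle inequality and AM–GM give `V ≥ λ²(s − m²)² + 2μνs`, and completing the square,
`λ²(s − m²)² + 2μνs = (λ(s − m²) + μν/λ)² + 2μνm² − μ²ν²/λ²`, gives the bound, attained exactly at
`s = m² − μν/λ² = μνr²`. On the family `∂₄W = ∂₅W = 0` (the `e^{−2iθ}` term of `z₃` cancels `3σz₅²`),
`z₄z₅ = μνr²` and `|μz₄| = |νz₅|`, so every inequality above is an equality.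
-/

def cdfmW (lam mu nu m sig : ℂ) (z : Fin 5 → ℂ) : ℂ :=
  lam * z 0 * (z 3 * z 4 - m ^ 2) + mu * z 1 * z 3 + nu * z 2 * z 4 + sig * (z 4) ^ 3

def cdfmF (lam mu nu m sig : ℂ) (z : Fin 5 → ℂ) : Fin 5 → ℂ :=
  ![lam * (z 3 * z 4 - m ^ 2), mu * z 3, nu * z 4,
    lam * z 0 * z 4 + mu * z 1,
    lam * z 0 * z 3 + nu * z 2 + 3 * sig * z 4 ^ 2]

theorem fderiv_cdfmW_single (lam mu nu m sig : ℂ) (w : Fin 5 → ℂ) (i : Fin 5) :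
    fderiv ℂ (cdfmW lam mu nu m sig) w (Pi.single i 1) = cdfmF lam mu nu m sig w i := by
  have c (j : Fin 5) := hasFDerivAt_apply (𝕜 := ℂ) j w
  have h : HasFDerivAt (cdfmW lam mu nu m sig) _ w :=
    ((((c 0).const_mul lam).mul (((c 3).mul (c 4)).sub_const (m ^ 2))).add
      (((c 1).const_mul mu).mul (c 3))).add (((c 2).const_mul nu).mul (c 4)) |>.add
      (((c 4).pow 3).const_mul sig)
  rw [h.fderiv]
  fin_cases i <;> simp [cdfmF] <;> ring

theorem sub_sq_div_le_sq_mul_sub_sq_add {lam : ℝ} (hlam : lam ≠ 0) (p m s : ℝ) :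
    2 * p * m ^ 2 - p ^ 2 / lam ^ 2 ≤ lam ^ 2 * (s - m ^ 2) ^ 2 + 2 * p * s := by
  have hsquare : lam ^ 2 * (s - m ^ 2) ^ 2 + 2 * p * s - (2 * p * m ^ 2 - p ^ 2 / lam ^ 2) =
      (lam * (s - m ^ 2) + p / lam) ^ 2 := by
    field_simp
    ring
  linarith [sq_nonneg (lam * (s - m ^ 2) + p / lam)]

theorem norm_ofReal_mul_sq (a : ℝ) (z : ℂ) : ‖(a : ℂ) * z‖ ^ 2 = a ^ 2 * ‖z‖ ^ 2 := by
  rw [norm_mul, Complex.norm_real, Real.norm_eq_abs, mul_pow, sq_abs]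

theorem le_sum_norm_sq_cdfmF {lam : ℝ} (hlam : lam ≠ 0) (mu nu m sig : ℝ) (w : Fin 5 → ℂ) :
    2 * mu * nu * m ^ 2 - mu ^ 2 * nu ^ 2 / lam ^ 2 ≤
      ∑ i, ‖cdfmF lam mu nu m sig w i‖ ^ 2 := by
  have hF0 : lam ^ 2 * (‖w 3‖ * ‖w 4‖ - m ^ 2) ^ 2 ≤ ‖cdfmF lam mu nu m sig w 0‖ ^ 2 := by
    have h := abs_norm_sub_norm_le (w 3 * w 4) ((m : ℂ) ^ 2)
    rw [norm_mul, norm_pow, Complex.norm_real, Real.norm_eq_abs, sq_abs] at h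
    simp only [cdfmF, Matrix.cons_val]
    rw [norm_ofReal_mul_sq]
    exact mul_le_mul_of_nonneg_left (sq_le_sq' (abs_le.1 h).1 (abs_le.1 h).2) (sq_nonneg lam)
  have hF12 : 2 * (mu * nu) * (‖w 3‖ * ‖w 4‖) ≤
      ‖cdfmF lam mu nu m sig w 1‖ ^ 2 + ‖cdfmF lam mu nu m sig w 2‖ ^ 2 := by
    simp only [cdfmF, Matrix.cons_val]
    rw [norm_ofReal_mul_sq, norm_ofReal_mul_sq]
    nlinarith [sq_nonneg (mu * ‖w 3‖ - nu * ‖w 4‖)]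
  rw [Fin.sum_univ_five]
  have hsquare := sub_sq_div_le_sq_mul_sub_sq_add hlam (mu * nu) m (‖w 3‖ * ‖w 4‖)
  rw [mul_pow] at hsquare
  linarith [sq_nonneg ‖cdfmF lam mu nu m sig w 3‖, sq_nonneg ‖cdfmF lam mu nu m sig w 4‖]

noncomputable def cdfmVacuum (lam mu nu sig r θ : ℝ) (t : ℂ) : Fin 5 → ℂ :=
  ![t,
    -(lam : ℂ) * t * (r : ℂ) * Complex.exp (-(θ : ℂ) * Complex.I),
    -(lam : ℂ) * t * (r : ℂ) * Complex.exp ((θ : ℂ) * Complex.I) -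
      ((3 * sig * mu ^ 2 * r ^ 2 / nu : ℝ) : ℂ) * Complex.exp (-2 * (θ : ℂ) * Complex.I),
    (nu : ℂ) * (r : ℂ) * Complex.exp ((θ : ℂ) * Complex.I),
    (mu : ℂ) * (r : ℂ) * Complex.exp (-(θ : ℂ) * Complex.I)]

section Vacuum

variable {lam mu nu m sig r θ : ℝ} {t : ℂ}

theorem cdfmF_cdfmVacuum_three :
    cdfmF lam mu nu m sig (cdfmVacuum lam mu nu sig r θ t) 3 = 0 := by
  simp only [cdfmF, cdfmVacuum, Matrix.cons_val]
  ring

theorem cdfmF_cdfmVacuum_four (hnu : nu ≠ 0) :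
    cdfmF lam mu nu m sig (cdfmVacuum lam mu nu sig r θ t) 4 = 0 := by
  have hexp :
      Complex.exp (-2 * (θ : ℂ) * Complex.I) = Complex.exp (-(θ : ℂ) * Complex.I) ^ 2 := by
    rw [← Complex.exp_nat_mul]; ring_nf
  have hnu' : (nu : ℂ) ≠ 0 := by exact_mod_cast hnu
  simp only [cdfmF, cdfmVacuum, Matrix.cons_val, hexp]
  push_cast
  field_simp
  ring

theorem sum_norm_sq_cdfmF_cdfmVacuum (hnu : nu ≠ 0) :
    ∑ i, ‖cdfmF lam mu nu m sig (cdfmVacuum lam mu nu sig r θ t) i‖ ^ 2 =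
      lam ^ 2 * (mu * nu * r ^ 2 - m ^ 2) ^ 2 + 2 * (mu * nu * r) ^ 2 := by
  have hphase : Complex.exp ((θ : ℂ) * Complex.I) * Complex.exp (-(θ : ℂ) * Complex.I) = 1 := by
    rw [← Complex.exp_add]; ring_nf; exact Complex.exp_zero
  have hF0 : cdfmF lam mu nu m sig (cdfmVacuum lam mu nu sig r θ t) 0 =
      ((lam * (mu * nu * r ^ 2 - m ^ 2) : ℝ) : ℂ) := by
    simp only [cdfmF, cdfmVacuum, Matrix.cons_val]
    push_cast
    linear_combination lam * mu * nu * r ^ 2 * hphase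
  have hconj : ‖Complex.exp (-(θ : ℂ) * Complex.I)‖ = 1 := by
    simpa using Complex.norm_exp_ofReal_mul_I (-θ)
  rw [Fin.sum_univ_five, cdfmF_cdfmVacuum_three, cdfmF_cdfmVacuum_four hnu, hF0,
    Complex.norm_real, Real.norm_eq_abs, sq_abs]
  simp only [cdfmF, cdfmVacuum, Matrix.cons_val, norm_mul, Complex.norm_real, Real.norm_eq_abs,
    Complex.norm_exp_ofReal_mul_I, hconj, norm_zero, mul_one, mul_pow, sq_abs]
  ring

end Vacuum

theorem cdfm_vacuum_family_general
    (lam mu nu m sig : ℝ)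
    (hmu : 0 < mu) (hnu : 0 < nu)
    (hcond : mu * nu < lam ^ 2 * m ^ 2)
    (r : ℝ) (hr : r = Real.sqrt (m ^ 2 / (mu * nu) - 1 / lam ^ 2))
    (W : (Fin 5 → ℂ) → ℂ)
    (hW : ∀ z, W z = (lam : ℂ) * z 0 * (z 3 * z 4 - (m : ℂ) ^ 2) +
      (mu : ℂ) * z 1 * z 3 + (nu : ℂ) * z 2 * z 4 + (sig : ℂ) * (z 4) ^ 3)
    (V : (Fin 5 → ℂ) → ℝ)
    (hV : ∀ z, V z = ∑ i, ‖fderiv ℂ W z (Pi.single i 1)‖ ^ 2) :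
    0 < r ∧
    ∀ (θ : ℝ) (t : ℂ),
      let z : Fin 5 → ℂ :=
        ![t,
          -(lam : ℂ) * t * (r : ℂ) * Complex.exp (-(θ : ℂ) * Complex.I),
          -(lam : ℂ) * t * (r : ℂ) * Complex.exp ((θ : ℂ) * Complex.I) -
            ((3 * sig * mu ^ 2 * r ^ 2 / nu : ℝ) : ℂ) * Complex.exp (-2 * (θ : ℂ) * Complex.I),
          (nu : ℂ) * (r : ℂ) * Complex.exp ((θ : ℂ) * Complex.I),
          (mu : ℂ) * (r : ℂ) * Complex.exp (-(θ : ℂ) * Complex.I)]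
      fderiv ℂ W z (Pi.single 3 1) = 0 ∧
      fderiv ℂ W z (Pi.single 4 1) = 0 ∧
      V z = 2 * mu * nu * m ^ 2 - mu ^ 2 * nu ^ 2 / lam ^ 2 ∧
      (∀ w : Fin 5 → ℂ, V z ≤ V w) ∧
      z 3 ≠ 0 ∧ z 4 ≠ 0 := by
  have hmn : 0 < mu * nu := mul_pos hmu hnu
  have hlam : lam ≠ 0 := by rintro rfl; linarith
  have hrad : 0 < m ^ 2 / (mu * nu) - 1 / lam ^ 2 := by
    rw [sub_pos, div_lt_div_iff₀ (by positivity) hmn]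
    linarith
  have hrpos : 0 < r := hr ▸ Real.sqrt_pos.2 hrad
  have hr2 : mu * nu * r ^ 2 = m ^ 2 - mu * nu / lam ^ 2 := by
    rw [hr, Real.sq_sqrt hrad.le]
    field_simp
  obtain rfl : W = cdfmW lam mu nu m sig := funext hW
  have hVF (w : Fin 5 → ℂ) : V w = ∑ i, ‖cdfmF lam mu nu m sig w i‖ ^ 2 := by
    simp only [hV, fderiv_cdfmW_single]
  refine ⟨hrpos, fun θ t => ?_⟩
  have hVz :
      V (cdfmVacuum lam mu nu sig r θ t) = 2 * mu * nu * m ^ 2 - mu ^ 2 * nu ^ 2 / lam ^ 2 := by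
    rw [hVF, sum_norm_sq_cdfmF_cdfmVacuum hnu.ne',
      show (mu * nu * r) ^ 2 = mu * nu * (mu * nu * r ^ 2) by ring, hr2]
    field_simp
    ring
  refine ⟨?_, ?_, hVz, fun w => hVz ▸ hVF w ▸ le_sum_norm_sq_cdfmF hlam mu nu m sig w, ?_, ?_⟩
  · rw [fderiv_cdfmW_single]
    exact cdfmF_cdfmVacuum_three
  · rw [fderiv_cdfmW_single]
    exact cdfmF_cdfmVacuum_four hnu.ne'
  · simp [hnu.ne', hrpos.ne']
  · simp [hmu.ne', hrpos.ne']

/-- CDFM model with `0 < μν < λ²m²` and `r = √(m²/(μν) − 1/λ²) > 0`.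
For every `θ ∈ ℝ` and `t ∈ ℂ`, the point
`z₁ = t, z₂ = −λtr e^{−iθ}, z₃ = −λtr e^{iθ} − (3σμ²r²/ν) e^{−2iθ},
z₄ = νr e^{iθ}, z₅ = μr e^{−iθ}` satisfies `∂W/∂z₄ = ∂W/∂z₅ = 0` and
`V(z) = 2μνm² − μ²ν²/λ²`; together with the lower bound `V ≥ 2μνm² − μ²ν²/λ²`, this
3-real-parameter family consists of global minima of `V`, and on it `z₄ ≠ 0`, `z₅ ≠ 0`,
so the R-symmetry is spontaneously broken everywhere on this pseudomoduli space. -/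
theorem cdfm_vacuum_family
    (lam mu nu m sig : ℝ)
    (hlam : 0 < lam) (hmu : 0 < mu) (hnu : 0 < nu) (hm : 0 < m) (hsig : 0 < sig)
    (hcond : mu * nu < lam ^ 2 * m ^ 2)
    (r : ℝ) (hr : r = Real.sqrt (m ^ 2 / (mu * nu) - 1 / lam ^ 2))
    (W : (Fin 5 → ℂ) → ℂ)
    (hW : ∀ z, W z = (lam : ℂ) * z 0 * (z 3 * z 4 - (m : ℂ) ^ 2) +
      (mu : ℂ) * z 1 * z 3 + (nu : ℂ) * z 2 * z 4 + (sig : ℂ) * (z 4) ^ 3)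
    (V : (Fin 5 → ℂ) → ℝ)
    (hV : ∀ z, V z = ∑ i, ‖fderiv ℂ W z (Pi.single i 1)‖ ^ 2) :
    0 < r ∧
    ∀ (θ : ℝ) (t : ℂ),
      let z : Fin 5 → ℂ :=
        ![t,
          -(lam : ℂ) * t * (r : ℂ) * Complex.exp (-(θ : ℂ) * Complex.I),
          -(lam : ℂ) * t * (r : ℂ) * Complex.exp ((θ : ℂ) * Complex.I) -
            ((3 * sig * mu ^ 2 * r ^ 2 / nu : ℝ) : ℂ) * Complex.exp (-2 * (θ : ℂ) * Complex.I),
          (nu : ℂ) * (r : ℂ) * Complex.exp ((θ : ℂ) * Complex.I),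
          (mu : ℂ) * (r : ℂ) * Complex.exp (-(θ : ℂ) * Complex.I)]
      fderiv ℂ W z (Pi.single 3 1) = 0 ∧
      fderiv ℂ W z (Pi.single 4 1) = 0 ∧
      V z = 2 * mu * nu * m ^ 2 - mu ^ 2 * nu ^ 2 / lam ^ 2 ∧
      (∀ w : Fin 5 → ℂ, V z ≤ V w) ∧
      z 3 ≠ 0 ∧ z 4 ≠ 0 :=
  cdfm_vacuum_family_general lam mu nu m sig hmu hnu hcond r hr W hW V hV
end

section
/- Assume 0 < μν < λ²m². Every global minimizer of V, i.e. every z ∈ ℂ⁵ with V(z) = 2μνm² − μ²ν²/λ², satisfies z₄ ≠ 0 and z₅ ≠ 0 (indeed equality forces z₄z₅ = m² − μν/λ² ≠ 0); hence the R-symmetry, under which z₄ and z₅ carry nonzero R-charges, is spontaneously broken at every point of the vacuum space. -/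
open Complex

/-!
Write `c = z₄z₅`. The F-terms `∂₁W = λ(c − m²)`, `∂₂W = μz₄`, `∂₃W = νz₅` alone give, by AM-GM and
the reverse triangle inequality,
`V ≥ λ²(|c| − m²)² + 2μν|c| = λ²(|c| − (m² − μν/λ²))² + 2μνm² − μ²ν²/λ²`.
At the minimal value both inequalities are equalities: `|c| = m² − μν/λ²`, and
`|c − m²| = ||c| − m²|` with `m² > 0` forces `c` to be a nonnegative real, so `c = m² − μν/λ²`.
-/

theorem Complex.eq_norm_of_norm_sub_ofReal_le {c : ℂ} {a : ℝ} (ha : 0 < a)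
    (h : ‖c - a‖ ≤ |‖c‖ - a|) : c = ‖c‖ := by
  have hsq : ‖c - a‖ ^ 2 ≤ (‖c‖ - a) ^ 2 := by
    simpa only [sq_abs] using pow_le_pow_left₀ (norm_nonneg _) h 2
  have hre : c.re = ‖c‖ := by
    refine le_antisymm (re_le_norm c) (le_of_mul_le_mul_left ?_ (mul_pos two_pos ha))
    rw [← normSq_eq_norm_sq, normSq_sub, normSq_eq_norm_sq, normSq_ofReal] at hsq
    simp only [conj_ofReal, mul_re, ofReal_re, ofReal_im, mul_zero, sub_zero] at hsq
    nlinarith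
  rw [← hre]
  exact eq_re_of_ofReal_le (ofReal_zero ▸ re_eq_norm.mp hre)

namespace CDFM

variable (lam mu nu m sig : ℝ)

def superpotential (z : Fin 5 → ℂ) : ℂ :=
  (lam : ℂ) * z 0 * (z 3 * z 4 - (m : ℂ) ^ 2) +
    (mu : ℂ) * z 1 * z 3 + (nu : ℂ) * z 2 * z 4 + (sig : ℂ) * (z 4) ^ 3

/-- The F-terms `∂W/∂zᵢ`. -/
def fTerm (z : Fin 5 → ℂ) : Fin 5 → ℂ :=
  ![lam * (z 3 * z 4 - m ^ 2), mu * z 3, nu * z 4, lam * z 0 * z 4 + mu * z 1,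
    lam * z 0 * z 3 + nu * z 2 + 3 * sig * z 4 ^ 2]

noncomputable def vacuumEnergy : ℝ := 2 * mu * nu * m ^ 2 - mu ^ 2 * nu ^ 2 / lam ^ 2

noncomputable def vev : ℝ := m ^ 2 - mu * nu / lam ^ 2

theorem hasFDerivAt_superpotential (z : Fin 5 → ℂ) :
    HasFDerivAt (superpotential lam mu nu m sig)
      (∑ i, fTerm lam mu nu m sig z i • (ContinuousLinearMap.proj i : (Fin 5 → ℂ) →L[ℂ] ℂ)) z := by
  have hcoord (i : Fin 5) :
      HasFDerivAt (fun w : Fin 5 → ℂ ↦ w i) (ContinuousLinearMap.proj i : (Fin 5 → ℂ) →L[ℂ] ℂ) z :=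
    hasFDerivAt_apply i z
  refine HasFDerivAt.congr_fderiv (((((hcoord 0).const_mul (lam : ℂ)).mul
      (((hcoord 3).mul (hcoord 4)).sub_const ((m : ℂ) ^ 2))).add
      (((hcoord 1).const_mul (mu : ℂ)).mul (hcoord 3))).add
      (((hcoord 2).const_mul (nu : ℂ)).mul (hcoord 4)) |>.add
      (((hcoord 4).pow 3).const_mul (sig : ℂ))) ?_
  ext v
  simp only [add_apply, smul_apply, ContinuousLinearMap.proj_apply, smul_eq_mul, Pi.mul_apply,
    nsmul_eq_mul, fTerm, Fin.sum_univ_five, Matrix.cons_val_zero, Matrix.cons_val_one,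
    Matrix.cons_val]
  ring

theorem fderiv_superpotential_single (z : Fin 5 → ℂ) (i : Fin 5) :
    fderiv ℂ (superpotential lam mu nu m sig) z (Pi.single i 1) = fTerm lam mu nu m sig z i := by
  simp [(hasFDerivAt_superpotential lam mu nu m sig z).fderiv, Pi.single_apply]

theorem sq_norm_sub_add_le_sum_sq_norm_fTerm (z : Fin 5 → ℂ) :
    lam ^ 2 * ‖z 3 * z 4 - (m : ℂ) ^ 2‖ ^ 2 + 2 * mu * nu * ‖z 3 * z 4‖ ≤
      ∑ i, ‖fTerm lam mu nu m sig z i‖ ^ 2 := by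
  have hsq_norm (a : ℝ) (w : ℂ) : ‖(a : ℂ) * w‖ ^ 2 = a ^ 2 * ‖w‖ ^ 2 := by
    rw [norm_mul, norm_real, Real.norm_eq_abs, mul_pow, sq_abs]
  have amgm := two_mul_le_add_sq (mu * ‖z 3‖) (nu * ‖z 4‖)
  simp only [Fin.sum_univ_five, fTerm, Matrix.cons_val_zero, Matrix.cons_val_one, Matrix.cons_val,
    hsq_norm]
  rw [norm_mul]
  nlinarith [sq_nonneg ‖fTerm lam mu nu m sig z 3‖, sq_nonneg ‖fTerm lam mu nu m sig z 4‖]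

theorem sq_sub_add_eq_sq_sub_vev_add_vacuumEnergy (hlam : lam ≠ 0) (p : ℝ) :
    lam ^ 2 * (p - m ^ 2) ^ 2 + 2 * mu * nu * p =
      lam ^ 2 * (p - vev lam mu nu m) ^ 2 + vacuumEnergy lam mu nu m := by
  unfold vev vacuumEnergy
  field_simp
  ring

theorem mul_eq_vev_of_sum_sq_norm_fTerm_eq_vacuumEnergy (hlam : lam ≠ 0) (hm : m ≠ 0) (z : Fin 5 → ℂ)
    (hz : ∑ i, ‖fTerm lam mu nu m sig z i‖ ^ 2 = vacuumEnergy lam mu nu m) :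
    z 3 * z 4 = vev lam mu nu m := by
  have hbound := sq_norm_sub_add_le_sum_sq_norm_fTerm lam mu nu m sig z
  rw [hz] at hbound
  set c := z 3 * z 4
  have hid := sq_sub_add_eq_sq_sub_vev_add_vacuumEnergy lam mu nu m hlam ‖c‖
  have hreverse : (‖c‖ - m ^ 2) ^ 2 ≤ ‖c - (m : ℂ) ^ 2‖ ^ 2 := by
    have h := abs_norm_sub_norm_le c ((m : ℂ) ^ 2)
    rw [norm_pow, norm_real, Real.norm_eq_abs, sq_abs] at h
    exact sq_le_sq' (abs_le.mp h).1 (abs_le.mp h).2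
  have hlam2 : (0 : ℝ) < lam ^ 2 := by positivity
  have hnorm : ‖c‖ = vev lam mu nu m := by
    have h : lam ^ 2 * (‖c‖ - vev lam mu nu m) ^ 2 = 0 :=
      le_antisymm (by nlinarith) (by positivity)
    simpa [hlam, sub_eq_zero] using h
  have htight : ‖c - (m : ℂ) ^ 2‖ ≤ |‖c‖ - m ^ 2| := by
    refine abs_norm (c - (m : ℂ) ^ 2) ▸ sq_le_sq.mp (le_of_mul_le_mul_left ?_ hlam2)
    rw [hnorm] at hid hbound ⊢
    linarith
  have hm2 : (0 : ℝ) < m ^ 2 := by positivity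
  rw [← hnorm]
  exact_mod_cast Complex.eq_norm_of_norm_sub_ofReal_le hm2 (by exact_mod_cast htight)

theorem vev_pos (hlam : lam ≠ 0) (hcond : mu * nu < lam ^ 2 * m ^ 2) : 0 < vev lam mu nu m := by
  rw [vev, sub_pos, div_lt_iff₀ (by positivity)]
  linarith

end CDFM

theorem cdfm_R_broken_on_all_vacua_general
    (lam mu nu m sig : ℝ)
    (hlam : 0 < lam) (hm : 0 < m)
    (hcond : mu * nu < lam ^ 2 * m ^ 2)
    (W : (Fin 5 → ℂ) → ℂ)
    (hW : ∀ z, W z = (lam : ℂ) * z 0 * (z 3 * z 4 - (m : ℂ) ^ 2) +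
      (mu : ℂ) * z 1 * z 3 + (nu : ℂ) * z 2 * z 4 + (sig : ℂ) * (z 4) ^ 3)
    (V : (Fin 5 → ℂ) → ℝ)
    (hV : ∀ z, V z = ∑ i, ‖fderiv ℂ W z (Pi.single i 1)‖ ^ 2) :
    ∀ z : Fin 5 → ℂ, V z = 2 * mu * nu * m ^ 2 - mu ^ 2 * nu ^ 2 / lam ^ 2 →
      z 3 ≠ 0 ∧ z 4 ≠ 0 ∧
      z 3 * z 4 = ((m ^ 2 - mu * nu / lam ^ 2 : ℝ) : ℂ) ∧
      ((m ^ 2 - mu * nu / lam ^ 2 : ℝ) : ℂ) ≠ 0 := by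
  intro z hz
  obtain rfl : W = CDFM.superpotential lam mu nu m sig := funext hW
  simp only [hV, CDFM.fderiv_superpotential_single] at hz
  have hc := CDFM.mul_eq_vev_of_sum_sq_norm_fTerm_eq_vacuumEnergy lam mu nu m sig hlam.ne' hm.ne' z hz
  have hvev : (CDFM.vev lam mu nu m : ℂ) ≠ 0 :=
    ofReal_ne_zero.mpr (CDFM.vev_pos lam mu nu m hlam.ne' hcond).ne'
  exact ⟨left_ne_zero_of_mul (hc ▸ hvev), right_ne_zero_of_mul (hc ▸ hvev), hc, hvev⟩

/-- CDFM model with `0 < μν < λ²m²`. Every global minimizer of `V`, i.e.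
every `z ∈ ℂ⁵` with `V(z) = 2μνm² − μ²ν²/λ²`, satisfies `z₄ ≠ 0` and `z₅ ≠ 0` (indeed
equality forces `z₄z₅ = m² − μν/λ² ≠ 0`); hence the R-symmetry, under which `z₄` and `z₅`
carry nonzero R-charges, is spontaneously broken at every point of the vacuum space. -/
theorem cdfm_R_broken_on_all_vacua
    (lam mu nu m sig : ℝ)
    (hlam : 0 < lam) (hmu : 0 < mu) (hnu : 0 < nu) (hm : 0 < m) (hsig : 0 < sig)
    (hcond : mu * nu < lam ^ 2 * m ^ 2)
    (W : (Fin 5 → ℂ) → ℂ)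
    (hW : ∀ z, W z = (lam : ℂ) * z 0 * (z 3 * z 4 - (m : ℂ) ^ 2) +
      (mu : ℂ) * z 1 * z 3 + (nu : ℂ) * z 2 * z 4 + (sig : ℂ) * (z 4) ^ 3)
    (V : (Fin 5 → ℂ) → ℝ)
    (hV : ∀ z, V z = ∑ i, ‖fderiv ℂ W z (Pi.single i 1)‖ ^ 2) :
    ∀ z : Fin 5 → ℂ, V z = 2 * mu * nu * m ^ 2 - mu ^ 2 * nu ^ 2 / lam ^ 2 →
      z 3 ≠ 0 ∧ z 4 ≠ 0 ∧
      z 3 * z 4 = ((m ^ 2 - mu * nu / lam ^ 2 : ℝ) : ℂ) ∧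
      ((m ^ 2 - mu * nu / lam ^ 2 : ℝ) : ℂ) ≠ 0 :=
  cdfm_R_broken_on_all_vacua_general lam mu nu m sig hlam hm hcond W hW V hV
end

section
/- For every z ∈ ℂ⁷, the scalar potential of the Mz² model satisfies V(z) > 0; equivalently, the equations ∂W/∂z_i(z) = 0 for i = 1,…,7 (in particular λ(z₄z₅ − m²) = 0, μz₄ = 0, νz₅ = 0) have no common solution, so the model has no supersymmetric vacuum. The same holds for the σz³ model. -/
/-! The F-terms `∂W/∂z₁ = λ(z₄z₅ − m²)` and `∂W/∂z₂ = μz₄` (in Lean `z 0` is `z₁`) never vanish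
together: `μz₄ = 0` forces `z₄ = 0`, and then `∂W/∂z₁ = −λm² ≠ 0`. Each partial derivative is
read off from `W` being affine in the corresponding coordinate. -/

open Complex Function

theorem fderiv_apply_single_of_update_affine {𝕜 ι : Type*} [NontriviallyNormedField 𝕜]
    [Fintype ι] [DecidableEq ι] {W : (ι → 𝕜) → 𝕜} {z : ι → 𝕜} {i : ι} {c : 𝕜}
    (hW : DifferentiableAt 𝕜 W z) (h : ∀ t, W (update z i t) = c * t + W (update z i 0)) :
    fderiv 𝕜 W z (Pi.single i 1) = c := by
  have hline : HasDerivAt (W ∘ update z i) (fderiv 𝕜 W z (Pi.single i 1)) (z i) :=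
    hW.hasFDerivAt.comp_hasDerivAt_of_eq (z i) (hasDerivAt_update z i (z i))
      (update_eq_self i z).symm
  have haffine : HasDerivAt (W ∘ update z i) c (z i) := by
    rw [show W ∘ update z i = fun t => c * t + W (update z i 0) from funext h]
    simpa using ((hasDerivAt_id (z i)).const_mul c).add_const (W (update z i 0))
  exact hline.unique haffine

theorem mul_sub_sq_ne_zero_or_mul_ne_zero {K : Type*} [Field K] {lam mu m : K} (hlam : lam ≠ 0)
    (hmu : mu ≠ 0) (hm : m ≠ 0) (x y : K) : lam * (x * y - m ^ 2) ≠ 0 ∨ mu * x ≠ 0 := by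
  rw [or_iff_not_imp_right, not_not, mul_eq_zero, or_iff_right hmu]
  rintro rfl
  simp [hlam, hm]

section Model

variable {lam mu nu m a b : ℂ} {f : ℂ → ℂ} {W : (Fin 7 → ℂ) → ℂ}

theorem model_fderiv_single_zero_and_one (hf : Differentiable ℂ f)
    (hW : ∀ z, W z = lam * z 0 * (z 3 * z 4 - m ^ 2) + mu * z 1 * z 3 + nu * z 2 * z 4 +
      a * z 4 ^ 2 * z 5 + b * z 3 * z 5 * z 6 + f (z 6)) (z : Fin 7 → ℂ) :
    fderiv ℂ W z (Pi.single 0 1) = lam * (z 3 * z 4 - m ^ 2) ∧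
      fderiv ℂ W z (Pi.single 1 1) = mu * z 3 := by
  have hdiff : Differentiable ℂ W := by
    rw [funext hW]
    fun_prop
  refine ⟨?_, ?_⟩ <;>
  · refine fderiv_apply_single_of_update_affine (hdiff z) fun t => ?_
    simp only [hW, update_self, ne_eq, update_of_ne, Fin.reduceEq, not_false_eq_true]
    ring

theorem exists_fderiv_single_ne_zero (hlam : lam ≠ 0) (hmu : mu ≠ 0) (hm : m ≠ 0)
    (hf : Differentiable ℂ f)
    (hW : ∀ z, W z = lam * z 0 * (z 3 * z 4 - m ^ 2) + mu * z 1 * z 3 + nu * z 2 * z 4 +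
      a * z 4 ^ 2 * z 5 + b * z 3 * z 5 * z 6 + f (z 6)) (z : Fin 7 → ℂ) :
    ∃ i, fderiv ℂ W z (Pi.single i 1) ≠ 0 := by
  obtain ⟨h0, h1⟩ := model_fderiv_single_zero_and_one hf hW z
  rcases mul_sub_sq_ne_zero_or_mul_ne_zero hlam hmu hm (z 3) (z 4) with h | h
  · exact ⟨0, h0 ▸ h⟩
  · exact ⟨1, h1 ▸ h⟩

theorem model_no_susy_vacuum (hlam : lam ≠ 0) (hmu : mu ≠ 0) (hm : m ≠ 0)
    (hf : Differentiable ℂ f)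
    (hW : ∀ z, W z = lam * z 0 * (z 3 * z 4 - m ^ 2) + mu * z 1 * z 3 + nu * z 2 * z 4 +
      a * z 4 ^ 2 * z 5 + b * z 3 * z 5 * z 6 + f (z 6))
    {V : (Fin 7 → ℂ) → ℝ} (hV : ∀ z, V z = ∑ i, ‖fderiv ℂ W z (Pi.single i 1)‖ ^ 2) :
    (∀ z, 0 < V z) ∧ ¬ ∃ z : Fin 7 → ℂ, ∀ i, fderiv ℂ W z (Pi.single i 1) = 0 := by
  have key := exists_fderiv_single_ne_zero hlam hmu hm hf hW
  refine ⟨fun z => ?_, fun ⟨z, hz⟩ => ?_⟩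
  · obtain ⟨i, hi⟩ := key z
    rw [hV]
    exact Finset.sum_pos' (fun j _ => by positivity)
      ⟨i, Finset.mem_univ i, pow_pos (norm_pos_iff.mpr hi) 2⟩
  · obtain ⟨i, hi⟩ := key z
    exact hi (hz i)

end Model

theorem seven_field_models_no_susy_vacuum_general
    (lam mu nu m a b M sig : ℝ)
    (hlam : 0 < lam) (hmu : 0 < mu) (hm : 0 < m)
    (W1 : (Fin 7 → ℂ) → ℂ)
    (hW1 : ∀ z, W1 z = (lam : ℂ) * z 0 * (z 3 * z 4 - (m : ℂ) ^ 2) +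
      (mu : ℂ) * z 1 * z 3 + (nu : ℂ) * z 2 * z 4 + (a : ℂ) * (z 4) ^ 2 * z 5 +
      (b : ℂ) * z 3 * z 5 * z 6 + (M : ℂ) * (z 6) ^ 2)
    (V1 : (Fin 7 → ℂ) → ℝ)
    (hV1 : ∀ z, V1 z = ∑ i, ‖fderiv ℂ W1 z (Pi.single i 1)‖ ^ 2)
    (W2 : (Fin 7 → ℂ) → ℂ)
    (hW2 : ∀ z, W2 z = (lam : ℂ) * z 0 * (z 3 * z 4 - (m : ℂ) ^ 2) +
      (mu : ℂ) * z 1 * z 3 + (nu : ℂ) * z 2 * z 4 + (a : ℂ) * (z 4) ^ 2 * z 5 +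
      (b : ℂ) * z 3 * z 5 * z 6 + (sig : ℂ) * (z 6) ^ 3)
    (V2 : (Fin 7 → ℂ) → ℝ)
    (hV2 : ∀ z, V2 z = ∑ i, ‖fderiv ℂ W2 z (Pi.single i 1)‖ ^ 2) :
    ((∀ z, 0 < V1 z) ∧ ¬ ∃ z : Fin 7 → ℂ, ∀ i, fderiv ℂ W1 z (Pi.single i 1) = 0) ∧
    ((∀ z, 0 < V2 z) ∧ ¬ ∃ z : Fin 7 → ℂ, ∀ i, fderiv ℂ W2 z (Pi.single i 1) = 0) := by
  have hlam' : (lam : ℂ) ≠ 0 := ofReal_ne_zero.mpr hlam.ne'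
  have hmu' : (mu : ℂ) ≠ 0 := ofReal_ne_zero.mpr hmu.ne'
  have hm' : (m : ℂ) ≠ 0 := ofReal_ne_zero.mpr hm.ne'
  exact ⟨model_no_susy_vacuum (f := fun w => M * w ^ 2) hlam' hmu' hm' (by fun_prop) hW1 hV1,
    model_no_susy_vacuum (f := fun w => sig * w ^ 3) hlam' hmu' hm' (by fun_prop) hW2 hV2⟩

/-- The `Mz²` model: seven chiral fields with superpotential
`W = λ z₁(z₄z₅ − m²) + μ z₂z₄ + ν z₃z₅ + a z₅²z₆ + b z₄z₆z₇ + M z₇²`, positive real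
parameters, `V(z) = Σᵢ |∂W/∂z_i|²`. For every `z ∈ ℂ⁷`, `V(z) > 0`; equivalently the
equations `∂W/∂z_i = 0`, `i = 1,…,7`, have no common solution: no SUSY vacuum.
The same holds for the `σz³` model, where `M z₇²` is replaced by `σ z₇³`. -/
theorem seven_field_models_no_susy_vacuum
    (lam mu nu m a b M sig : ℝ)
    (hlam : 0 < lam) (hmu : 0 < mu) (hnu : 0 < nu) (hm : 0 < m)
    (ha : 0 < a) (hb : 0 < b) (hM : 0 < M) (hsig : 0 < sig)
    (W1 : (Fin 7 → ℂ) → ℂ)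
    (hW1 : ∀ z, W1 z = (lam : ℂ) * z 0 * (z 3 * z 4 - (m : ℂ) ^ 2) +
      (mu : ℂ) * z 1 * z 3 + (nu : ℂ) * z 2 * z 4 + (a : ℂ) * (z 4) ^ 2 * z 5 +
      (b : ℂ) * z 3 * z 5 * z 6 + (M : ℂ) * (z 6) ^ 2)
    (V1 : (Fin 7 → ℂ) → ℝ)
    (hV1 : ∀ z, V1 z = ∑ i, ‖fderiv ℂ W1 z (Pi.single i 1)‖ ^ 2)
    (W2 : (Fin 7 → ℂ) → ℂ)
    (hW2 : ∀ z, W2 z = (lam : ℂ) * z 0 * (z 3 * z 4 - (m : ℂ) ^ 2) +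
      (mu : ℂ) * z 1 * z 3 + (nu : ℂ) * z 2 * z 4 + (a : ℂ) * (z 4) ^ 2 * z 5 +
      (b : ℂ) * z 3 * z 5 * z 6 + (sig : ℂ) * (z 6) ^ 3)
    (V2 : (Fin 7 → ℂ) → ℝ)
    (hV2 : ∀ z, V2 z = ∑ i, ‖fderiv ℂ W2 z (Pi.single i 1)‖ ^ 2) :
    ((∀ z, 0 < V1 z) ∧ ¬ ∃ z : Fin 7 → ℂ, ∀ i, fderiv ℂ W1 z (Pi.single i 1) = 0) ∧
    ((∀ z, 0 < V2 z) ∧ ¬ ∃ z : Fin 7 → ℂ, ∀ i, fderiv ℂ W2 z (Pi.single i 1) = 0) :=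
  seven_field_models_no_susy_vacuum_general lam mu nu m a b M sig hlam hmu hm W1 hW1 V1 hV1 W2 hW2
    V2 hV2
end

section
/- Assume μν < λ²m² and set r = √(m²/(μν) − 1/λ²) > 0. For every θ ∈ ℝ and t ∈ ℂ, the point z₁ = t, z₂ = −λtr e^{−iθ} + (2Ma²μ³/(b²ν³)) r e^{−7iθ}, z₃ = −λtr e^{iθ} − (4Ma²μ³/(b²ν³)) r e^{−5iθ}, z₄ = νr e^{iθ}, z₅ = μr e^{−iθ}, z₆ = (2Maμ²/(b²ν²)) e^{−4iθ}, z₇ = −(aμ²/(bν)) r e^{−3iθ} satisfies ∂W/∂z_i(z) = 0 for i = 4, 5, 6, 7 and V(z) = 2μνm² − μ²ν²/λ². Moreover V(w) ≥ 2μνm² − μ²ν²/λ² > 0 for every w ∈ ℂ⁷, so this 3-real-parameter family consists of global minima of V, and the strictly positive minimum value shows supersymmetry is broken with no runaway. -/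
/-!
The F-terms along `z₁, z₂, z₃` alone give `V ≥ λ²|z₄z₅ − m²|² + μ²|z₄|² + ν²|z₅|²`. Writing
`s = |z₄||z₅| − m²`, the bounds `|z₄z₅ − m²| ≥ |s|` and `μ²|z₄|² + ν²|z₅|² ≥ 2μν|z₄||z₅|` make this
at least `λ²s² + 2μνs + 2μνm² = (λs + μν/λ)² + 2μνm² − μ²ν²/λ²`. On the family
`z₄z₅ = μνr² = m² − μν/λ²` sits at the bottom of that square, `|z₄| = νr` and `|z₅| = μr` make the
second bound an equality, and the F-terms along `z₄, …, z₇` vanish identically in `t` and `θ`.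
-/

open Complex

section Superpotential

variable {R : Type*} [CommRing R] (lam mu nu m a b M : R)

def mz2Superpotential (z : Fin 7 → R) : R :=
  lam * z 0 * (z 3 * z 4 - m ^ 2) + mu * z 1 * z 3 + nu * z 2 * z 4 + a * z 4 ^ 2 * z 5 +
    b * z 3 * z 5 * z 6 + M * z 6 ^ 2

def mz2Gradient (z : Fin 7 → R) : Fin 7 → R :=
  ![lam * (z 3 * z 4 - m ^ 2), mu * z 3, nu * z 4,
    lam * z 0 * z 4 + mu * z 1 + b * z 5 * z 6,
    lam * z 0 * z 3 + nu * z 2 + 2 * a * z 4 * z 5,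
    a * z 4 ^ 2 + b * z 3 * z 6,
    b * z 3 * z 5 + 2 * M * z 6]

end Superpotential

theorem fderiv_mz2Superpotential_single {𝕜 : Type*} [NontriviallyNormedField 𝕜]
    (lam mu nu m a b M : 𝕜) (z : Fin 7 → 𝕜) (i : Fin 7) :
    fderiv 𝕜 (mz2Superpotential lam mu nu m a b M) z (Pi.single i 1) =
      mz2Gradient lam mu nu m a b M z i := by
  have h (j : Fin 7) := hasFDerivAt_apply (𝕜 := 𝕜) j z
  have hW := (((((((h 0).const_mul lam).mul (((h 3).mul (h 4)).sub_const (m ^ 2))).add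
    (((h 1).const_mul mu).mul (h 3))).add (((h 2).const_mul nu).mul (h 4))).add
    (((h 4).pow 2).const_mul a |>.mul (h 5))).add
    ((((h 3).const_mul b).mul (h 5)).mul (h 6))).add (((h 6).pow 2).const_mul M)
  rw [(show HasFDerivAt (mz2Superpotential lam mu nu m a b M) _ z from hW).fderiv]
  fin_cases i <;> simp [mz2Gradient] <;> ring

section Vacuum

variable {K : Type*} [Field K] (lam mu nu m a b M r t E : K)

def mz2Vacuum : Fin 7 → K :=
  ![t,
    -lam * t * r * E + 2 * M * a ^ 2 * mu ^ 3 / (b ^ 2 * nu ^ 3) * r * E ^ 7,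
    -lam * t * r * E⁻¹ - 4 * M * a ^ 2 * mu ^ 3 / (b ^ 2 * nu ^ 3) * r * E ^ 5,
    nu * r * E⁻¹,
    mu * r * E,
    2 * M * a * mu ^ 2 / (b ^ 2 * nu ^ 2) * E ^ 4,
    -(a * mu ^ 2 / (b * nu)) * r * E ^ 3]

theorem mz2Gradient_mz2Vacuum (hb : b ≠ 0) (hnu : nu ≠ 0) (hE : E ≠ 0) :
    mz2Gradient lam mu nu m a b M (mz2Vacuum lam mu nu a b M r t E) =
      ![lam * (mu * nu * r ^ 2 - m ^ 2), mu * nu * r * E⁻¹, mu * nu * r * E, 0, 0, 0, 0] := by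
  ext i
  fin_cases i <;>
    simp only [mz2Gradient, mz2Vacuum, Fin.zero_eta, Fin.mk_one, Fin.reduceFinMk,
      Matrix.cons_val] <;>
    field_simp <;> ring

end Vacuum

noncomputable def mz2MinValue (lam mu nu m : ℝ) : ℝ :=
  2 * mu * nu * m ^ 2 - mu ^ 2 * nu ^ 2 / lam ^ 2

theorem mz2MinValue_pos {lam mu nu m : ℝ} (hlam : lam ≠ 0) (hmu : 0 < mu) (hnu : 0 < nu)
    (hcond : mu * nu < lam ^ 2 * m ^ 2) : 0 < mz2MinValue lam mu nu m := by
  have h : mu ^ 2 * nu ^ 2 / lam ^ 2 < mu * nu * m ^ 2 := by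
    rw [div_lt_iff₀ (by positivity)]
    nlinarith [mul_pos hmu hnu]
  unfold mz2MinValue
  nlinarith [mul_nonneg (mul_pos hmu hnu).le (sq_nonneg m)]

theorem mz2MinValue_le_sq_add_sq (lam mu nu m x y : ℝ) (hlam : lam ≠ 0) :
    mz2MinValue lam mu nu m ≤
      lam ^ 2 * (x * y - m ^ 2) ^ 2 + mu ^ 2 * x ^ 2 + nu ^ 2 * y ^ 2 := by
  have key : lam ^ 2 * (x * y - m ^ 2) ^ 2 + mu ^ 2 * x ^ 2 + nu ^ 2 * y ^ 2 -
      mz2MinValue lam mu nu m =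
        (mu * x - nu * y) ^ 2 + (lam ^ 2 * (x * y - m ^ 2) + mu * nu) ^ 2 / lam ^ 2 := by
    unfold mz2MinValue
    field_simp
    ring
  linarith [sq_nonneg (mu * x - nu * y),
    div_nonneg (sq_nonneg (lam ^ 2 * (x * y - m ^ 2) + mu * nu)) (sq_nonneg lam)]

theorem norm_ofReal_mul_sq_s14 (c : ℝ) (w : ℂ) : ‖(c : ℂ) * w‖ ^ 2 = c ^ 2 * ‖w‖ ^ 2 := by
  rw [norm_mul, norm_real, Real.norm_eq_abs, mul_pow, sq_abs]

theorem mz2MinValue_le_norm_sq_add (lam mu nu m : ℝ) (hlam : lam ≠ 0) (u v : ℂ) :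
    mz2MinValue lam mu nu m ≤
      ‖(lam : ℂ) * (u * v - (m : ℂ) ^ 2)‖ ^ 2 + ‖(mu : ℂ) * u‖ ^ 2 + ‖(nu : ℂ) * v‖ ^ 2 := by
  have hdist : (‖u‖ * ‖v‖ - m ^ 2) ^ 2 ≤ ‖u * v - (m : ℂ) ^ 2‖ ^ 2 := by
    rw [← sq_abs]
    gcongr
    have hm : ‖(m : ℂ) ^ 2‖ = m ^ 2 := by
      rw [norm_pow, norm_real, Real.norm_eq_abs, sq_abs]
    have h := abs_norm_sub_norm_le (u * v) ((m : ℂ) ^ 2)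
    rwa [norm_mul, hm] at h
  simp only [norm_ofReal_mul_sq_s14]
  linarith [mz2MinValue_le_sq_add_sq lam mu nu m ‖u‖ ‖v‖ hlam,
    mul_le_mul_of_nonneg_left hdist (sq_nonneg lam)]

theorem mz2MinValue_le_sum_norm_mz2Gradient_sq (lam mu nu m a b M : ℝ) (hlam : lam ≠ 0)
    (w : Fin 7 → ℂ) :
    mz2MinValue lam mu nu m ≤ ∑ i, ‖mz2Gradient (lam : ℂ) mu nu m a b M w i‖ ^ 2 :=
  calc _ ≤ _ := mz2MinValue_le_norm_sq_add lam mu nu m hlam (w 3) (w 4)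
    _ = ∑ i ∈ {0, 1, 2}, ‖mz2Gradient (lam : ℂ) mu nu m a b M w i‖ ^ 2 := by
      simp [mz2Gradient, add_assoc]
    _ ≤ _ := Finset.sum_le_sum_of_subset_of_nonneg (Finset.subset_univ _)
      fun _ _ _ => by positivity

theorem sum_norm_mz2Gradient_mz2Vacuum_sq (lam mu nu m a b M r : ℝ) (t E : ℂ)
    (hlam : lam ≠ 0) (hb : b ≠ 0) (hmu : mu ≠ 0) (hnu : nu ≠ 0) (hE : ‖E‖ = 1)
    (hr : r ^ 2 = m ^ 2 / (mu * nu) - 1 / lam ^ 2) :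
    ∑ i, ‖mz2Gradient (lam : ℂ) mu nu m a b M (mz2Vacuum (lam : ℂ) mu nu a b M r t E) i‖ ^ 2 =
      mz2MinValue lam mu nu m := by
  have hE0 : E ≠ 0 := norm_ne_zero_iff.1 (hE ▸ one_ne_zero)
  rw [mz2Gradient_mz2Vacuum _ _ _ _ _ _ _ _ _ _ (ofReal_ne_zero.2 hb) (ofReal_ne_zero.2 hnu)
    hE0, Fin.sum_univ_seven]
  simp only [Matrix.cons_val, norm_zero, norm_mul, norm_inv, hE, ← ofReal_pow, ← ofReal_mul,
    ← ofReal_sub, norm_real, Real.norm_eq_abs, mul_pow, sq_abs]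
  rw [mz2MinValue, hr]
  field_simp
  ring

theorem Mz2_vacuum_family_general
    (lam mu nu m a b M : ℝ)
    (hlam : 0 < lam) (hmu : 0 < mu) (hnu : 0 < nu) (hb : 0 < b)
    (hcond : mu * nu < lam ^ 2 * m ^ 2)
    (r : ℝ) (hr : r = Real.sqrt (m ^ 2 / (mu * nu) - 1 / lam ^ 2))
    (W : (Fin 7 → ℂ) → ℂ)
    (hW : ∀ z, W z = (lam : ℂ) * z 0 * (z 3 * z 4 - (m : ℂ) ^ 2) +
      (mu : ℂ) * z 1 * z 3 + (nu : ℂ) * z 2 * z 4 + (a : ℂ) * (z 4) ^ 2 * z 5 +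
      (b : ℂ) * z 3 * z 5 * z 6 + (M : ℂ) * (z 6) ^ 2)
    (V : (Fin 7 → ℂ) → ℝ)
    (hV : ∀ z, V z = ∑ i, ‖fderiv ℂ W z (Pi.single i 1)‖ ^ 2) :
    0 < r ∧
    0 < 2 * mu * nu * m ^ 2 - mu ^ 2 * nu ^ 2 / lam ^ 2 ∧
    (∀ w : Fin 7 → ℂ, 2 * mu * nu * m ^ 2 - mu ^ 2 * nu ^ 2 / lam ^ 2 ≤ V w) ∧
    ∀ (θ : ℝ) (t : ℂ),
      let z : Fin 7 → ℂ :=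
        ![t,
          -(lam : ℂ) * t * (r : ℂ) * Complex.exp (-(θ : ℂ) * Complex.I) +
            ((2 * M * a ^ 2 * mu ^ 3 / (b ^ 2 * nu ^ 3) : ℝ) : ℂ) * (r : ℂ) *
              Complex.exp (-7 * (θ : ℂ) * Complex.I),
          -(lam : ℂ) * t * (r : ℂ) * Complex.exp ((θ : ℂ) * Complex.I) -
            ((4 * M * a ^ 2 * mu ^ 3 / (b ^ 2 * nu ^ 3) : ℝ) : ℂ) * (r : ℂ) *
              Complex.exp (-5 * (θ : ℂ) * Complex.I),
          (nu : ℂ) * (r : ℂ) * Complex.exp ((θ : ℂ) * Complex.I),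
          (mu : ℂ) * (r : ℂ) * Complex.exp (-(θ : ℂ) * Complex.I),
          ((2 * M * a * mu ^ 2 / (b ^ 2 * nu ^ 2) : ℝ) : ℂ) *
            Complex.exp (-4 * (θ : ℂ) * Complex.I),
          -((a * mu ^ 2 / (b * nu) : ℝ) : ℂ) * (r : ℂ) *
            Complex.exp (-3 * (θ : ℂ) * Complex.I)]
      fderiv ℂ W z (Pi.single 3 1) = 0 ∧
      fderiv ℂ W z (Pi.single 4 1) = 0 ∧
      fderiv ℂ W z (Pi.single 5 1) = 0 ∧
      fderiv ℂ W z (Pi.single 6 1) = 0 ∧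
      V z = 2 * mu * nu * m ^ 2 - mu ^ 2 * nu ^ 2 / lam ^ 2 ∧
      (∀ w : Fin 7 → ℂ, V z ≤ V w) := by
  have hW' : W = mz2Superpotential (lam : ℂ) mu nu m a b M := funext hW
  have hV' (w : Fin 7 → ℂ) : V w = ∑ i, ‖mz2Gradient (lam : ℂ) mu nu m a b M w i‖ ^ 2 := by
    simp only [hV, hW', fderiv_mz2Superpotential_single]
  have hlow (w : Fin 7 → ℂ) : mz2MinValue lam mu nu m ≤ V w :=
    hV' w ▸ mz2MinValue_le_sum_norm_mz2Gradient_sq lam mu nu m a b M hlam.ne' w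
  have hρ : 0 < m ^ 2 / (mu * nu) - 1 / lam ^ 2 := by
    rw [sub_pos, div_lt_div_iff₀ (by positivity) (by positivity)]
    linarith
  refine ⟨hr ▸ Real.sqrt_pos.2 hρ, mz2MinValue_pos hlam.ne' hmu hnu hcond, hlow, ?_⟩
  intro θ t z
  have hz : z = mz2Vacuum (lam : ℂ) mu nu a b M r t (exp (-θ * I)) := by
    simp only [z, mz2Vacuum, ← exp_nat_mul, ← exp_neg]
    push_cast
    ring_nf
  have hgrad := mz2Gradient_mz2Vacuum (lam : ℂ) mu nu m a b M r t _
    (ofReal_ne_zero.2 hb.ne') (ofReal_ne_zero.2 hnu.ne') (exp_ne_zero (-θ * I))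
  rw [← hz] at hgrad
  have hVz : V z = mz2MinValue lam mu nu m := by
    rw [hV', hz]
    exact sum_norm_mz2Gradient_mz2Vacuum_sq lam mu nu m a b M r t _ hlam.ne' hb.ne' hmu.ne'
      hnu.ne' (by simpa using norm_exp_ofReal_mul_I (-θ)) (hr ▸ Real.sq_sqrt hρ.le)
  simp only [hW', fderiv_mz2Superpotential_single, hgrad]
  exact ⟨rfl, rfl, rfl, rfl, hVz, fun w => hVz.trans_le (hlow w)⟩

/-- `Mz²` model with `μν < λ²m²` and `r = √(m²/(μν) − 1/λ²) > 0`.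
For every `θ ∈ ℝ` and `t ∈ ℂ` the point
`z₁ = t`, `z₂ = −λtr e^{−iθ} + (2Ma²μ³/(b²ν³)) r e^{−7iθ}`,
`z₃ = −λtr e^{iθ} − (4Ma²μ³/(b²ν³)) r e^{−5iθ}`, `z₄ = νr e^{iθ}`, `z₅ = μr e^{−iθ}`,
`z₆ = (2Maμ²/(b²ν²)) e^{−4iθ}`, `z₇ = −(aμ²/(bν)) r e^{−3iθ}` satisfies
`∂W/∂z_i = 0` for `i = 4,5,6,7` and `V(z) = 2μνm² − μ²ν²/λ²`. Moreover
`V(w) ≥ 2μνm² − μ²ν²/λ² > 0` for every `w ∈ ℂ⁷`, so this 3-real-parameter family consists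
of global minima of `V`, and the strictly positive minimum shows SUSY breaking without
runaway. -/
theorem Mz2_vacuum_family
    (lam mu nu m a b M : ℝ)
    (hlam : 0 < lam) (hmu : 0 < mu) (hnu : 0 < nu) (hm : 0 < m)
    (ha : 0 < a) (hb : 0 < b) (hM : 0 < M)
    (hcond : mu * nu < lam ^ 2 * m ^ 2)
    (r : ℝ) (hr : r = Real.sqrt (m ^ 2 / (mu * nu) - 1 / lam ^ 2))
    (W : (Fin 7 → ℂ) → ℂ)
    (hW : ∀ z, W z = (lam : ℂ) * z 0 * (z 3 * z 4 - (m : ℂ) ^ 2) +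
      (mu : ℂ) * z 1 * z 3 + (nu : ℂ) * z 2 * z 4 + (a : ℂ) * (z 4) ^ 2 * z 5 +
      (b : ℂ) * z 3 * z 5 * z 6 + (M : ℂ) * (z 6) ^ 2)
    (V : (Fin 7 → ℂ) → ℝ)
    (hV : ∀ z, V z = ∑ i, ‖fderiv ℂ W z (Pi.single i 1)‖ ^ 2) :
    0 < r ∧
    0 < 2 * mu * nu * m ^ 2 - mu ^ 2 * nu ^ 2 / lam ^ 2 ∧
    (∀ w : Fin 7 → ℂ, 2 * mu * nu * m ^ 2 - mu ^ 2 * nu ^ 2 / lam ^ 2 ≤ V w) ∧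
    ∀ (θ : ℝ) (t : ℂ),
      let z : Fin 7 → ℂ :=
        ![t,
          -(lam : ℂ) * t * (r : ℂ) * Complex.exp (-(θ : ℂ) * Complex.I) +
            ((2 * M * a ^ 2 * mu ^ 3 / (b ^ 2 * nu ^ 3) : ℝ) : ℂ) * (r : ℂ) *
              Complex.exp (-7 * (θ : ℂ) * Complex.I),
          -(lam : ℂ) * t * (r : ℂ) * Complex.exp ((θ : ℂ) * Complex.I) -
            ((4 * M * a ^ 2 * mu ^ 3 / (b ^ 2 * nu ^ 3) : ℝ) : ℂ) * (r : ℂ) *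
              Complex.exp (-5 * (θ : ℂ) * Complex.I),
          (nu : ℂ) * (r : ℂ) * Complex.exp ((θ : ℂ) * Complex.I),
          (mu : ℂ) * (r : ℂ) * Complex.exp (-(θ : ℂ) * Complex.I),
          ((2 * M * a * mu ^ 2 / (b ^ 2 * nu ^ 2) : ℝ) : ℂ) *
            Complex.exp (-4 * (θ : ℂ) * Complex.I),
          -((a * mu ^ 2 / (b * nu) : ℝ) : ℂ) * (r : ℂ) *
            Complex.exp (-3 * (θ : ℂ) * Complex.I)]
      fderiv ℂ W z (Pi.single 3 1) = 0 ∧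
      fderiv ℂ W z (Pi.single 4 1) = 0 ∧
      fderiv ℂ W z (Pi.single 5 1) = 0 ∧
      fderiv ℂ W z (Pi.single 6 1) = 0 ∧
      V z = 2 * mu * nu * m ^ 2 - mu ^ 2 * nu ^ 2 / lam ^ 2 ∧
      (∀ w : Fin 7 → ℂ, V z ≤ V w) :=
  Mz2_vacuum_family_general lam mu nu m a b M hlam hmu hnu hb hcond r hr W hW V hV
end

section
/- Assume μν < λ²m² and set r = √(m²/(μν) − 1/λ²) > 0. For every θ ∈ ℝ and t ∈ ℂ, the point z₁ = t, z₂ = −λtr e^{−iθ} − (3σa³μ⁵/(b³ν⁴)) r² e^{−10iθ}, z₃ = −λtr e^{iθ} + (6σa³μ⁵/(b³ν⁴)) r² e^{−8iθ}, z₄ = νr e^{iθ}, z₅ = μr e^{−iθ}, z₆ = −(3σa²μ⁴/(b³ν³)) r e^{−7iθ}, z₇ = −(aμ²/(bν)) r e^{−3iθ} satisfies ∂W/∂z_i(z) = 0 for i = 4, 5, 6, 7 and V(z) = 2μνm² − μ²ν²/λ². Moreover V(w) ≥ 2μνm² − μ²ν²/λ² > 0 for every w ∈ ℂ⁷, so this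 3-real-parameter family consists of global minima of V, and the strictly positive minimum value shows supersymmetry is broken with no runaway. -/
/-!
Only the F-terms `F₁ = λ(z₄z₅ − m²)`, `F₂ = μz₄`, `F₃ = νz₅` enter the lower bound. With
`x = ‖z₄‖`, `y = ‖z₅‖` and `c = ‖z₄z₅ − m²‖ ≥ m² − xy` one has
`μ²x² + ν²y² ≥ 2μνxy ≥ 2μν(m² − c)` and `λ²c² − 2μνc ≥ −μ²ν²/λ²` (a square), which add up to
`V ≥ 2μνm² − μ²ν²/λ²`. On the vacuum family the other four F-terms cancel identically in `t` and
`θ`, and `r` is chosen so that `μνr² − m² = −μν/λ²`, the equality case of the second estimate.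
-/

open Complex

-- For numerals such as `(10 : ℂ)`, which `exp_nat_mul` does not match; `no_index` lets `simp` use it.
theorem Complex.exp_ofNat_mul (n : ℕ) [n.AtLeastTwo] (x : ℂ) :
    exp ((no_index (OfNat.ofNat n) : ℂ) * x) = exp x ^ (OfNat.ofNat n : ℕ) := by
  rw [← exp_nat_mul, Nat.cast_ofNat]

namespace SigmaZ3

noncomputable section

variable (lam mu nu m a b sig : ℝ)

def superpotential (z : Fin 7 → ℂ) : ℂ :=
  (lam : ℂ) * z 0 * (z 3 * z 4 - (m : ℂ) ^ 2) +
      (mu : ℂ) * z 1 * z 3 + (nu : ℂ) * z 2 * z 4 + (a : ℂ) * (z 4) ^ 2 * z 5 +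
      (b : ℂ) * z 3 * z 5 * z 6 + (sig : ℂ) * (z 6) ^ 3

-- `fTerms z i = ∂W/∂z_{i+1}`: the paper's fields `z₁, …, z₇` are `z 0, …, z 6`.
def fTerms (z : Fin 7 → ℂ) : Fin 7 → ℂ :=
  ![lam * (z 3 * z 4 - m ^ 2), mu * z 3, nu * z 4,
    lam * z 0 * z 4 + mu * z 1 + b * z 5 * z 6,
    lam * z 0 * z 3 + nu * z 2 + 2 * a * z 4 * z 5,
    a * z 4 ^ 2 + b * z 3 * z 6,
    b * z 3 * z 5 + 3 * sig * z 6 ^ 2]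

def minEnergy : ℝ := 2 * mu * nu * m ^ 2 - mu ^ 2 * nu ^ 2 / lam ^ 2

def vacuum (r θ : ℝ) (t : ℂ) : Fin 7 → ℂ :=
  ![t,
    -(lam : ℂ) * t * (r : ℂ) * exp (-(θ : ℂ) * I) -
      ((3 * sig * a ^ 3 * mu ^ 5 / (b ^ 3 * nu ^ 4) : ℝ) : ℂ) * (r : ℂ) ^ 2 *
        exp (-10 * (θ : ℂ) * I),
    -(lam : ℂ) * t * (r : ℂ) * exp ((θ : ℂ) * I) +
      ((6 * sig * a ^ 3 * mu ^ 5 / (b ^ 3 * nu ^ 4) : ℝ) : ℂ) * (r : ℂ) ^ 2 *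
        exp (-8 * (θ : ℂ) * I),
    (nu : ℂ) * (r : ℂ) * exp ((θ : ℂ) * I),
    (mu : ℂ) * (r : ℂ) * exp (-(θ : ℂ) * I),
    -((3 * sig * a ^ 2 * mu ^ 4 / (b ^ 3 * nu ^ 3) : ℝ) : ℂ) * (r : ℂ) *
      exp (-7 * (θ : ℂ) * I),
    -((a * mu ^ 2 / (b * nu) : ℝ) : ℂ) * (r : ℂ) *
      exp (-3 * (θ : ℂ) * I)]

theorem hasFDerivAt_superpotential (z : Fin 7 → ℂ) :
    HasFDerivAt (superpotential lam mu nu m a b sig)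
      (∑ i, fTerms lam mu nu m a b sig z i •
        ContinuousLinearMap.proj (R := ℂ) (φ := fun _ : Fin 7 => ℂ) i) z := by
  have hp (i : Fin 7) := hasFDerivAt_apply (𝕜 := ℂ) i z
  have H := (((((((hp 0).const_mul (lam : ℂ)).mul (((hp 3).mul (hp 4)).sub_const ((m : ℂ) ^ 2))).add
      (((hp 1).const_mul (mu : ℂ)).mul (hp 3))).add
      (((hp 2).const_mul (nu : ℂ)).mul (hp 4))).add
      ((((hp 4).pow 2).const_mul (a : ℂ)).mul (hp 5))).add
      ((((hp 3).const_mul (b : ℂ)).mul (hp 5)).mul (hp 6))).add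
      (((hp 6).pow 3).const_mul (sig : ℂ))
  refine (H : HasFDerivAt (superpotential lam mu nu m a b sig) _ z).congr_fderiv ?_
  ext v
  simp only [smul_add, Pi.mul_apply, Nat.add_one_sub_one, pow_one, nsmul_eq_mul, Nat.cast_ofNat,
    add_apply, smul_apply, ContinuousLinearMap.proj_apply,
    smul_eq_mul, fTerms, Fin.sum_univ_seven, Matrix.cons_val]
  ring

theorem fderiv_superpotential_apply_single (z : Fin 7 → ℂ) (i : Fin 7) :
    fderiv ℂ (superpotential lam mu nu m a b sig) z (Pi.single i 1) =
      fTerms lam mu nu m a b sig z i := by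
  simp [(hasFDerivAt_superpotential lam mu nu m a b sig z).fderiv, Pi.single_apply]

theorem minEnergy_le_of_sub_le (hlam : lam ≠ 0) (hmn : 0 ≤ mu * nu) {x y c : ℝ}
    (hc : m ^ 2 - x * y ≤ c) :
    minEnergy lam mu nu m ≤ lam ^ 2 * c ^ 2 + mu ^ 2 * x ^ 2 + nu ^ 2 * y ^ 2 := by
  have hxy : 2 * mu * nu * (x * y) ≤ mu ^ 2 * x ^ 2 + nu ^ 2 * y ^ 2 := by
    nlinarith [sq_nonneg (mu * x - nu * y)]
  have hcc : 2 * mu * nu * c - mu ^ 2 * nu ^ 2 / lam ^ 2 ≤ lam ^ 2 * c ^ 2 := by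
    have hsq := sq_nonneg (lam * c - mu * nu / lam)
    rw [show (lam * c - mu * nu / lam) ^ 2 =
        lam ^ 2 * c ^ 2 - 2 * mu * nu * c + mu ^ 2 * nu ^ 2 / lam ^ 2 by field_simp; ring] at hsq
    linarith
  have hmc := mul_le_mul_of_nonneg_left hc (by positivity : 0 ≤ 2 * (mu * nu))
  unfold minEnergy
  linarith

theorem minEnergy_le_norm_sq (hlam : lam ≠ 0) (hmn : 0 ≤ mu * nu) (u v : ℂ) :
    minEnergy lam mu nu m ≤
      ‖(lam : ℂ) * (u * v - m ^ 2)‖ ^ 2 + ‖(mu : ℂ) * u‖ ^ 2 + ‖(nu : ℂ) * v‖ ^ 2 := by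
  have hc : m ^ 2 - ‖u‖ * ‖v‖ ≤ ‖u * v - m ^ 2‖ := by
    have hm : ‖(m : ℂ) ^ 2‖ = m ^ 2 := by
      rw [norm_pow, Complex.norm_real, Real.norm_eq_abs, sq_abs]
    have h := norm_sub_norm_le ((m : ℂ) ^ 2) (u * v)
    rwa [hm, norm_mul, norm_sub_rev] at h
  simpa only [norm_mul, Complex.norm_real, Real.norm_eq_abs, mul_pow, sq_abs]
    using minEnergy_le_of_sub_le lam mu nu m hlam hmn hc

theorem minEnergy_le_sum_norm_sq_fTerms (hlam : lam ≠ 0) (hmn : 0 ≤ mu * nu) (z : Fin 7 → ℂ) :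
    minEnergy lam mu nu m ≤ ∑ i, ‖fTerms lam mu nu m a b sig z i‖ ^ 2 := by
  set F := fTerms lam mu nu m a b sig z
  have h012 : minEnergy lam mu nu m ≤ ‖F 0‖ ^ 2 + ‖F 1‖ ^ 2 + ‖F 2‖ ^ 2 :=
    minEnergy_le_norm_sq lam mu nu m hlam hmn (z 3) (z 4)
  rw [Fin.sum_univ_seven]
  linarith [sq_nonneg ‖F 3‖, sq_nonneg ‖F 4‖, sq_nonneg ‖F 5‖, sq_nonneg ‖F 6‖]

theorem fTerms_vacuum (hb : b ≠ 0) (hnu : nu ≠ 0) (r θ : ℝ) (t : ℂ) :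
    fTerms lam mu nu m a b sig (vacuum lam mu nu a b sig r θ t) =
      ![((lam * (mu * nu * r ^ 2 - m ^ 2) : ℝ) : ℂ), (mu * nu * r : ℝ) * exp (θ * I),
        (mu * nu * r : ℝ) * (exp (θ * I))⁻¹, 0, 0, 0, 0] := by
  have hE : exp (θ * I) ≠ 0 := exp_ne_zero _
  have hbC : (b : ℂ) ≠ 0 := ofReal_ne_zero.2 hb
  have hnuC : (nu : ℂ) ≠ 0 := ofReal_ne_zero.2 hnu
  ext i
  fin_cases i <;>
    simp only [fTerms, vacuum, Matrix.cons_val, neg_mul, mul_assoc, exp_neg, exp_ofNat_mul] <;>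
    push_cast <;> field_simp <;> ring

theorem sum_norm_sq_fTerms_vacuum (hb : b ≠ 0) (hnu : nu ≠ 0) (r θ : ℝ) (t : ℂ) :
    ∑ i, ‖fTerms lam mu nu m a b sig (vacuum lam mu nu a b sig r θ t) i‖ ^ 2 =
      lam ^ 2 * (mu * nu * r ^ 2 - m ^ 2) ^ 2 + 2 * (mu * nu * r) ^ 2 := by
  rw [fTerms_vacuum lam mu nu m a b sig hb hnu, Fin.sum_univ_seven]
  simp only [Matrix.cons_val, norm_mul, Complex.norm_real, Real.norm_eq_abs, norm_inv,
    norm_exp_ofReal_mul_I, norm_zero, sq_abs, mul_pow]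
  ring

theorem minEnergy_eq (hlam : lam ≠ 0) (hmu : mu ≠ 0) (hnu : nu ≠ 0) {r : ℝ}
    (hr : r ^ 2 = m ^ 2 / (mu * nu) - 1 / lam ^ 2) :
    minEnergy lam mu nu m = lam ^ 2 * (mu * nu * r ^ 2 - m ^ 2) ^ 2 + 2 * (mu * nu * r) ^ 2 := by
  have hr' : mu * nu * r ^ 2 = m ^ 2 - mu * nu / lam ^ 2 := by
    rw [hr]
    field_simp
  rw [minEnergy, show (mu * nu * r) ^ 2 = mu * nu * (mu * nu * r ^ 2) by ring, hr']
  field_simp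
  ring

end

end SigmaZ3

open SigmaZ3

theorem sigma_z3_vacuum_family_general
    (lam mu nu m a b sig : ℝ)
    (hlam : 0 < lam) (hmu : 0 < mu) (hnu : 0 < nu)
    (hb : 0 < b)
    (hcond : mu * nu < lam ^ 2 * m ^ 2)
    (r : ℝ) (hr : r = Real.sqrt (m ^ 2 / (mu * nu) - 1 / lam ^ 2))
    (W : (Fin 7 → ℂ) → ℂ)
    (hW : ∀ z, W z = (lam : ℂ) * z 0 * (z 3 * z 4 - (m : ℂ) ^ 2) +
      (mu : ℂ) * z 1 * z 3 + (nu : ℂ) * z 2 * z 4 + (a : ℂ) * (z 4) ^ 2 * z 5 +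
      (b : ℂ) * z 3 * z 5 * z 6 + (sig : ℂ) * (z 6) ^ 3)
    (V : (Fin 7 → ℂ) → ℝ)
    (hV : ∀ z, V z = ∑ i, ‖fderiv ℂ W z (Pi.single i 1)‖ ^ 2) :
    0 < r ∧
    0 < 2 * mu * nu * m ^ 2 - mu ^ 2 * nu ^ 2 / lam ^ 2 ∧
    (∀ w : Fin 7 → ℂ, 2 * mu * nu * m ^ 2 - mu ^ 2 * nu ^ 2 / lam ^ 2 ≤ V w) ∧
    ∀ (θ : ℝ) (t : ℂ),
      let z : Fin 7 → ℂ :=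
        ![t,
          -(lam : ℂ) * t * (r : ℂ) * Complex.exp (-(θ : ℂ) * Complex.I) -
            ((3 * sig * a ^ 3 * mu ^ 5 / (b ^ 3 * nu ^ 4) : ℝ) : ℂ) * (r : ℂ) ^ 2 *
              Complex.exp (-10 * (θ : ℂ) * Complex.I),
          -(lam : ℂ) * t * (r : ℂ) * Complex.exp ((θ : ℂ) * Complex.I) +
            ((6 * sig * a ^ 3 * mu ^ 5 / (b ^ 3 * nu ^ 4) : ℝ) : ℂ) * (r : ℂ) ^ 2 *
              Complex.exp (-8 * (θ : ℂ) * Complex.I),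
          (nu : ℂ) * (r : ℂ) * Complex.exp ((θ : ℂ) * Complex.I),
          (mu : ℂ) * (r : ℂ) * Complex.exp (-(θ : ℂ) * Complex.I),
          -((3 * sig * a ^ 2 * mu ^ 4 / (b ^ 3 * nu ^ 3) : ℝ) : ℂ) * (r : ℂ) *
            Complex.exp (-7 * (θ : ℂ) * Complex.I),
          -((a * mu ^ 2 / (b * nu) : ℝ) : ℂ) * (r : ℂ) *
            Complex.exp (-3 * (θ : ℂ) * Complex.I)]
      fderiv ℂ W z (Pi.single 3 1) = 0 ∧
      fderiv ℂ W z (Pi.single 4 1) = 0 ∧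
      fderiv ℂ W z (Pi.single 5 1) = 0 ∧
      fderiv ℂ W z (Pi.single 6 1) = 0 ∧
      V z = 2 * mu * nu * m ^ 2 - mu ^ 2 * nu ^ 2 / lam ^ 2 ∧
      (∀ w : Fin 7 → ℂ, V z ≤ V w) := by
  have hW_eq : W = superpotential lam mu nu m a b sig := funext hW
  have hV_eq (z : Fin 7 → ℂ) : V z = ∑ i, ‖fTerms lam mu nu m a b sig z i‖ ^ 2 := by
    simp only [hV, hW_eq, fderiv_superpotential_apply_single]
  have hV_ge (w : Fin 7 → ℂ) : minEnergy lam mu nu m ≤ V w :=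
    hV_eq w ▸ minEnergy_le_sum_norm_sq_fTerms lam mu nu m a b sig hlam.ne' (by positivity) w
  have hrad : 0 < m ^ 2 / (mu * nu) - 1 / lam ^ 2 := by
    rw [sub_pos, div_lt_div_iff₀ (by positivity) (by positivity)]
    linarith
  have hr0 : 0 < r := hr ▸ Real.sqrt_pos.2 hrad
  have hmin := minEnergy_eq lam mu nu m hlam.ne' hmu.ne' hnu.ne' (hr ▸ Real.sq_sqrt hrad.le)
  refine ⟨hr0, show 0 < minEnergy lam mu nu m by rw [hmin]; positivity, hV_ge, fun θ t => ?_⟩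
  intro z
  have hz : z = vacuum lam mu nu a b sig r θ t := rfl
  have hF := fTerms_vacuum lam mu nu m a b sig hb.ne' hnu.ne' r θ t
  have hVz : V z = minEnergy lam mu nu m := by
    rw [hz, hV_eq, sum_norm_sq_fTerms_vacuum lam mu nu m a b sig hb.ne' hnu.ne', hmin]
  refine ⟨?_, ?_, ?_, ?_, hVz, fun w => hVz ▸ hV_ge w⟩ <;>
    rw [hz, hW_eq, fderiv_superpotential_apply_single, hF] <;> rfl

/-- `σz³` model with `μν < λ²m²` and `r = √(m²/(μν) − 1/λ²) > 0`.
For every `θ ∈ ℝ` and `t ∈ ℂ` the point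
`z₁ = t`, `z₂ = −λtr e^{−iθ} − (3σa³μ⁵/(b³ν⁴)) r² e^{−10iθ}`,
`z₃ = −λtr e^{iθ} + (6σa³μ⁵/(b³ν⁴)) r² e^{−8iθ}`, `z₄ = νr e^{iθ}`, `z₅ = μr e^{−iθ}`,
`z₆ = −(3σa²μ⁴/(b³ν³)) r e^{−7iθ}`, `z₇ = −(aμ²/(bν)) r e^{−3iθ}` satisfies
`∂W/∂z_i = 0` for `i = 4,5,6,7` and `V(z) = 2μνm² − μ²ν²/λ²`. Moreover
`V(w) ≥ 2μνm² − μ²ν²/λ² > 0` for every `w ∈ ℂ⁷`, so this 3-real-parameter family consists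
of global minima of `V`, and the strictly positive minimum shows SUSY breaking without
runaway. -/
theorem sigma_z3_vacuum_family
    (lam mu nu m a b sig : ℝ)
    (hlam : 0 < lam) (hmu : 0 < mu) (hnu : 0 < nu) (hm : 0 < m)
    (ha : 0 < a) (hb : 0 < b) (hsig : 0 < sig)
    (hcond : mu * nu < lam ^ 2 * m ^ 2)
    (r : ℝ) (hr : r = Real.sqrt (m ^ 2 / (mu * nu) - 1 / lam ^ 2))
    (W : (Fin 7 → ℂ) → ℂ)
    (hW : ∀ z, W z = (lam : ℂ) * z 0 * (z 3 * z 4 - (m : ℂ) ^ 2) +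
      (mu : ℂ) * z 1 * z 3 + (nu : ℂ) * z 2 * z 4 + (a : ℂ) * (z 4) ^ 2 * z 5 +
      (b : ℂ) * z 3 * z 5 * z 6 + (sig : ℂ) * (z 6) ^ 3)
    (V : (Fin 7 → ℂ) → ℝ)
    (hV : ∀ z, V z = ∑ i, ‖fderiv ℂ W z (Pi.single i 1)‖ ^ 2) :
    0 < r ∧
    0 < 2 * mu * nu * m ^ 2 - mu ^ 2 * nu ^ 2 / lam ^ 2 ∧
    (∀ w : Fin 7 → ℂ, 2 * mu * nu * m ^ 2 - mu ^ 2 * nu ^ 2 / lam ^ 2 ≤ V w) ∧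
    ∀ (θ : ℝ) (t : ℂ),
      let z : Fin 7 → ℂ :=
        ![t,
          -(lam : ℂ) * t * (r : ℂ) * Complex.exp (-(θ : ℂ) * Complex.I) -
            ((3 * sig * a ^ 3 * mu ^ 5 / (b ^ 3 * nu ^ 4) : ℝ) : ℂ) * (r : ℂ) ^ 2 *
              Complex.exp (-10 * (θ : ℂ) * Complex.I),
          -(lam : ℂ) * t * (r : ℂ) * Complex.exp ((θ : ℂ) * Complex.I) +
            ((6 * sig * a ^ 3 * mu ^ 5 / (b ^ 3 * nu ^ 4) : ℝ) : ℂ) * (r : ℂ) ^ 2 *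
              Complex.exp (-8 * (θ : ℂ) * Complex.I),
          (nu : ℂ) * (r : ℂ) * Complex.exp ((θ : ℂ) * Complex.I),
          (mu : ℂ) * (r : ℂ) * Complex.exp (-(θ : ℂ) * Complex.I),
          -((3 * sig * a ^ 2 * mu ^ 4 / (b ^ 3 * nu ^ 3) : ℝ) : ℂ) * (r : ℂ) *
            Complex.exp (-7 * (θ : ℂ) * Complex.I),
          -((a * mu ^ 2 / (b * nu) : ℝ) : ℂ) * (r : ℂ) *
            Complex.exp (-3 * (θ : ℂ) * Complex.I)]
      fderiv ℂ W z (Pi.single 3 1) = 0 ∧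
      fderiv ℂ W z (Pi.single 4 1) = 0 ∧
      fderiv ℂ W z (Pi.single 5 1) = 0 ∧
      fderiv ℂ W z (Pi.single 6 1) = 0 ∧
      V z = 2 * mu * nu * m ^ 2 - mu ^ 2 * nu ^ 2 / lam ^ 2 ∧
      (∀ w : Fin 7 → ℂ, V z ≤ V w) :=
  sigma_z3_vacuum_family_general lam mu nu m a b sig hlam hmu hnu hb hcond r hr W hW V hV
end

section
/- The CDFM model satisfies the necessary condition for absence of runaway: the subsystem of equations with R-charge q_i ≥ 2, namely {λ(z₄z₅ − m²) = 0, μz₄ = 0}, has no solution in ℂ⁵, and the subsystem with q_i ≤ 2, namely {λ(z₄z₅ − m²) = 0, νz₅ = 0, λz₁z₅ + μz₂ = 0, λz₁z₄ + νz₃ + 3σz₅² = 0}, also has no solution in ℂ⁵. -/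
open Complex Filter Topology

/-- The CDFM model (gradient components
`∂₁W = λ(z₄z₅ − m²)`, `∂₂W = μz₄`, `∂₃W = νz₅`, `∂₄W = λz₁z₅ + μz₂`,
`∂₅W = λz₁z₄ + νz₃ + 3σz₅²`, R-charges `q₁ = 2, q₂ = 8/3, q₃ = 4/3, q₄ = −2/3, q₅ = 2/3`)
satisfies the necessary condition for absence of runaway: the subsystem with `q_i ≥ 2`,
namely `{λ(z₄z₅ − m²) = 0, μz₄ = 0}`, has no solution in `ℂ⁵`, and the subsystem with
`q_i ≤ 2`, namely `{λ(z₄z₅ − m²) = 0, νz₅ = 0, λz₁z₅ + μz₂ = 0, λz₁z₄ + νz₃ + 3σz₅² = 0}`,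
also has no solution in `ℂ⁵`. -/
theorem cdfm_no_runaway_condition
    (lam mu nu m sig : ℝ)
    (hlam : 0 < lam) (hmu : 0 < mu) (hnu : 0 < nu) (hm : 0 < m) (hsig : 0 < sig) :
    (¬ ∃ z : Fin 5 → ℂ,
      (lam : ℂ) * (z 3 * z 4 - (m : ℂ) ^ 2) = 0 ∧
      (mu : ℂ) * z 3 = 0) ∧
    (¬ ∃ z : Fin 5 → ℂ,
      (lam : ℂ) * (z 3 * z 4 - (m : ℂ) ^ 2) = 0 ∧
      (nu : ℂ) * z 4 = 0 ∧
      (lam : ℂ) * z 0 * z 4 + (mu : ℂ) * z 1 = 0 ∧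
      (lam : ℂ) * z 0 * z 3 + (nu : ℂ) * z 2 + 3 * (sig : ℂ) * (z 4) ^ 2 = 0) := by
  have hlamC : (lam : ℂ) ≠ 0 := Complex.ofReal_ne_zero.mpr hlam.ne'
  have hmuC : (mu : ℂ) ≠ 0 := Complex.ofReal_ne_zero.mpr hmu.ne'
  have hnuC : (nu : ℂ) ≠ 0 := Complex.ofReal_ne_zero.mpr hnu.ne'
  have hmC : (m : ℂ) ≠ 0 := Complex.ofReal_ne_zero.mpr hm.ne'
  constructor
  · rintro ⟨z, h1, h2⟩
    have hz3 : z 3 = 0 := by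
      rcases mul_eq_zero.mp h2 with h | h
      · exact absurd h hmuC
      · exact h
    rcases mul_eq_zero.mp h1 with h | h
    · exact hlamC h
    · rw [hz3, zero_mul, zero_sub, neg_eq_zero] at h
      exact hmC (pow_eq_zero_iff (by norm_num) |>.mp h)
  · rintro ⟨z, h1, h2, -, -⟩
    have hz4 : z 4 = 0 := by
      rcases mul_eq_zero.mp h2 with h | h
      · exact absurd h hnuC
      · exact h
    rcases mul_eq_zero.mp h1 with h | h
    · exact hlamC h
    · rw [hz4, mul_zero, zero_sub, neg_eq_zero] at h
      exact hmC (pow_eq_zero_iff (by norm_num) |>.mp h)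
end
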